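/- arXiv:2201.08869 — 8 statements merged into one kernel-verified Lean document; each statement's English description precedes it below -/
import Mathlib

section
/- If α ≤ β are rank-r ramification sequences (componentwise inequality) and Λ is an arithmetic progression, then disp⁺_Λ(α) ≤ disp⁺_Λ(β) and disp⁻_Λ(α) ≤ disp⁻_Λ(β); that is, both displacement operations on ramification sequences are monotone with respect to componentwise order. -/
/-- An arithmetic progression: a proper subset of `ℤ` that is empty, a singleton,
or of the form `n + mℤ` with `m ≥ 2`. -/
def IsAP (Λ : Set ℤ) : Prop :=
  Λ ≠ Set.univ ∧
    (Λ = ∅ ∨ (∃ n : ℤ, Λ = {n}) ∨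
      ∃ n m : ℤ, 2 ≤ m ∧ Λ = {x : ℤ | ∃ k : ℤ, x = n + m * k})
/-- `α i` is increasable: the sequence stays nondecreasing after increasing entry `i` by 1. -/
def Increasable {m : ℕ} (α : Fin m → ℤ) (i : Fin m) : Prop :=
  Monotone (Function.update α i (α i + 1))

/-- `α i` is decreasable: the sequence stays nondecreasing after decreasing entry `i` by 1. -/
def Decreasable {m : ℕ} (α : Fin m → ℤ) (i : Fin m) : Prop :=
  Monotone (Function.update α i (α i - 1))

open Classical in
/-- Upward displacement of a ramification sequence along `Λ`. -/
noncomputable def dispPlus {m : ℕ} (Λ : Set ℤ) (α : Fin m → ℤ) : Fin m → ℤ :=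
  fun i => if Increasable α i ∧ α i + (i.val : ℤ) + 1 ∈ Λ then α i + 1 else α i

open Classical in
/-- Downward displacement of a ramification sequence along `Λ`. -/
noncomputable def dispMinus {m : ℕ} (Λ : Set ℤ) (α : Fin m → ℤ) : Fin m → ℤ :=
  fun i => if Decreasable α i ∧ α i + (i.val : ℤ) ∈ Λ then α i - 1 else α i

lemma inc_iff {m : ℕ} {α : Fin m → ℤ} (hα : Monotone α) {i : Fin m} :
    Increasable α i ↔ ∀ j, i < j → α i + 1 ≤ α j := by
  constructor
  · intro h j hij
    have := h hij.le
    rwa [Function.update_self, Function.update_of_ne hij.ne'] at this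
  · intro h a b hab
    rcases eq_or_ne a i with rfl | ha
    · rcases eq_or_ne b a with rfl | hb
      · exact le_rfl
      · rw [Function.update_self, Function.update_of_ne hb]
        exact h b (lt_of_le_of_ne hab (Ne.symm hb))
    · rw [Function.update_of_ne ha]
      rcases eq_or_ne b i with rfl | hb
      · rw [Function.update_self]
        exact (hα hab).trans (by linarith)
      · rw [Function.update_of_ne hb]; exact hα hab

lemma dec_iff {m : ℕ} {α : Fin m → ℤ} (hα : Monotone α) {i : Fin m} :
    Decreasable α i ↔ ∀ j, j < i → α j ≤ α i - 1 := by
  constructor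
  · intro h j hji
    have := h hji.le
    rwa [Function.update_self, Function.update_of_ne hji.ne] at this
  · intro h a b hab
    rcases eq_or_ne b i with rfl | hb
    · rcases eq_or_ne a b with rfl | ha
      · exact le_rfl
      · rw [Function.update_self, Function.update_of_ne ha]
        exact h a (lt_of_le_of_ne hab ha)
    · rw [Function.update_of_ne hb]
      rcases eq_or_ne a i with rfl | ha
      · rw [Function.update_self]
        exact le_trans (by linarith) (hα hab)
      · rw [Function.update_of_ne ha]; exact hα hab

/-- Both displacement operations on ramification sequences are monotone with respect to
the componentwise order. -/
theorem disp_monotone (r : ℕ) (α β : Fin (r+1) → ℤ) (hα : Monotone α) (hβ : Monotone β)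
    (hab : α ≤ β) (Λ : Set ℤ) (hΛ : IsAP Λ) :
    dispPlus Λ α ≤ dispPlus Λ β ∧ dispMinus Λ α ≤ dispMinus Λ β := by
  constructor
  · intro i
    simp only [dispPlus]
    split_ifs with h1 h2 h3
    · linarith [hab i]
    · -- hard case: α bumped, β not
      by_contra hc
      push_neg at hc
      have heq : α i = β i := le_antisymm (hab i) (by linarith)
      have hmem : β i + (i.val : ℤ) + 1 ∈ Λ := heq ▸ h1.2
      have hni : ¬ Increasable β i := fun h => h2 ⟨h, hmem⟩
      rw [inc_iff hβ] at hni
      push_neg at hni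
      obtain ⟨j, hij, hj⟩ := hni
      have h1' := (inc_iff hα).mp h1.1 j hij
      have := hab j
      linarith
    · linarith [hab i]
    · exact hab i
  · intro i
    simp only [dispMinus]
    split_ifs with h1 h2 h3
    · linarith [hab i]
    · linarith [hab i]
    · -- hard case: β dropped, α not
      by_contra hc
      push_neg at hc
      have heq : α i = β i := le_antisymm (hab i) (by linarith)
      have hmem : α i + (i.val : ℤ) ∈ Λ := heq ▸ h3.2
      have hna : ¬ Decreasable α i := fun h => h1 ⟨h, hmem⟩
      rw [dec_iff hα] at hna
      push_neg at hna
      obtain ⟨j, hji, hj⟩ := hna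
      have h3' := (dec_iff hβ).mp h3.1 j hji
      have := hab j
      linarith
    · exact hab i
end

section
/- Let α < β be rank-r ramification sequences (α ≤ β componentwise and α ≠ β), and let Λ be an arithmetic progression. The following are equivalent: (1) α and β are linked by Λ; (2) there exists a ramification sequence γ with α ≤ γ ≤ β such that α = disp⁻_Λ(γ) and β = disp⁺_Λ(γ); (3) every ramification sequence γ with α ≤ γ ≤ β satisfies α = disp⁻_Λ(γ) and β = disp⁺_Λ(γ). -/
/-- `α` and `β` are linked by `Λ` if `α = disp⁻_Λ(β)` and `β = disp⁺_Λ(α)`. -/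
def LinkedBy {m : ℕ} (Λ : Set ℤ) (α β : Fin m → ℤ) : Prop :=
  α = dispMinus Λ β ∧ β = dispPlus Λ α

/-- `α` and `β` are linked if they are linked by some arithmetic progression. -/
def Linked {m : ℕ} (α β : Fin m → ℤ) : Prop :=
  ∃ Λ : Set ℤ, IsAP Λ ∧ LinkedBy Λ α β

/-- The size `|β / α|` of the skew shape `β / α`. -/
def skewSize {m : ℕ} (α β : Fin m → ℤ) : ℤ := ∑ i, (β i - α i)

/-- `β / α` is an `n`-link: `α, β` are linked and `|β / α| = n`. -/
def IsNLink (n : ℤ) {m : ℕ} (α β : Fin m → ℤ) : Prop :=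
  Linked α β ∧ skewSize α β = n

lemma ap_not_consec {Λ : Set ℤ} (h : IsAP Λ) {x : ℤ} (hx : x ∈ Λ) (hx1 : x + 1 ∈ Λ) : False := by
  obtain ⟨-, h⟩ := h
  rcases h with h | ⟨n, h⟩ | ⟨n, m, hm, h⟩
  · rw [h] at hx; exact hx
  · rw [h] at hx hx1; simp only [Set.mem_singleton_iff] at hx hx1; omega
  · rw [h] at hx hx1
    obtain ⟨k, hk⟩ := hx
    obtain ⟨l, hl⟩ := hx1
    have h1 : m * (l - k) = 1 := by linarith [mul_sub m l k]
    have h2 : (m : ℤ) ∣ 1 := ⟨l - k, h1.symm⟩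
    have := Int.le_of_dvd one_pos h2
    omega

lemma increasable_iff {m : ℕ} {γ : Fin m → ℤ} (hγ : Monotone γ) (i : Fin m) :
    Increasable γ i ↔ ∀ j, i < j → γ i + 1 ≤ γ j := by
  constructor
  · intro h j hij
    have h2 := h (le_of_lt hij)
    rwa [Function.update_self, Function.update_of_ne hij.ne'] at h2
  · intro h a b hab
    rcases eq_or_ne a i with rfl | ha
    · rcases eq_or_ne b a with rfl | hb
      · exact le_refl _
      · rw [Function.update_self, Function.update_of_ne hb]
        exact h b (lt_of_le_of_ne hab (Ne.symm hb))
    · rw [Function.update_of_ne ha]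
      rcases eq_or_ne b i with rfl | hb
      · rw [Function.update_self]
        have := hγ hab; omega
      · rw [Function.update_of_ne hb]; exact hγ hab

lemma decreasable_iff {m : ℕ} {γ : Fin m → ℤ} (hγ : Monotone γ) (i : Fin m) :
    Decreasable γ i ↔ ∀ j, j < i → γ j + 1 ≤ γ i := by
  constructor
  · intro h j hij
    have h2 := h (le_of_lt hij)
    rw [Function.update_self, Function.update_of_ne hij.ne] at h2
    omega
  · intro h a b hab
    rcases eq_or_ne b i with rfl | hb
    · rcases eq_or_ne a b with rfl | ha
      · exact le_refl _
      · rw [Function.update_self, Function.update_of_ne ha]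
        have := h a (lt_of_le_of_ne hab ha); omega
    · rw [Function.update_of_ne hb]
      rcases eq_or_ne a i with rfl | ha
      · rw [Function.update_self]
        have := hγ hab; omega
      · rw [Function.update_of_ne ha]; exact hγ hab

def Cond (Λ : Set ℤ) {m : ℕ} (α β : Fin m → ℤ) : Prop :=
  (∀ i, α i < β i → α i + (i.val : ℤ) + 1 ∈ Λ) ∧
  (∀ i, α i = β i → ¬(Decreasable β i ∧ α i + (i.val : ℤ) ∈ Λ)) ∧
  (∀ i, α i = β i → ¬(Increasable α i ∧ α i + (i.val : ℤ) + 1 ∈ Λ))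

section Main
variable {m : ℕ} {Λ : Set ℤ} {α β γ : Fin m → ℤ}

lemma linked_cond (hL : LinkedBy Λ α β) : Cond Λ α β := by
  obtain ⟨hm, hp⟩ := hL
  refine ⟨?_, ?_, ?_⟩
  · intro i hi
    have h2 := congrFun hp i
    unfold dispPlus at h2
    by_cases h : Increasable α i ∧ α i + (i.val : ℤ) + 1 ∈ Λ
    · exact h.2
    · rw [if_neg h] at h2; exfalso; omega
  · intro i hi
    rintro ⟨hd, hmem⟩
    have h1 := congrFun hm i
    unfold dispMinus at h1
    rw [if_pos ⟨hd, by rw [← hi]; exact hmem⟩] at h1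
    omega
  · intro i hi
    rintro ⟨hu, hmem⟩
    have h2 := congrFun hp i
    unfold dispPlus at h2
    rw [if_pos ⟨hu, hmem⟩] at h2
    omega

lemma h01_of_linked (hL : LinkedBy Λ α β) : ∀ i, β i ≤ α i + 1 := by
  intro i
  have h1 := congrFun hL.1 i
  unfold dispMinus at h1
  by_cases h : Decreasable β i ∧ β i + (i.val : ℤ) ∈ Λ
  · rw [if_pos h] at h1; omega
  · rw [if_neg h] at h1; omega

lemma h01_of_p (hΛ : IsAP Λ) (hag : α ≤ γ) (hgb : γ ≤ β)
    (h1 : α = dispMinus Λ γ) (h2 : β = dispPlus Λ γ) : ∀ i, β i ≤ α i + 1 := by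
  intro i
  by_contra hcon
  push_neg at hcon
  have e1 := congrFun h1 i
  have e2 := congrFun h2 i
  unfold dispMinus at e1
  unfold dispPlus at e2
  have hai : α i ≤ γ i := hag i
  have hbi : γ i ≤ β i := hgb i
  by_cases hm : Decreasable γ i ∧ γ i + (i.val : ℤ) ∈ Λ
  · by_cases hp : Increasable γ i ∧ γ i + (i.val : ℤ) + 1 ∈ Λ
    · exact ap_not_consec hΛ hm.2 hp.2
    · rw [if_neg hp] at e2; rw [if_pos hm] at e1; omega
  · rw [if_neg hm] at e1
    by_cases hp : Increasable γ i ∧ γ i + (i.val : ℤ) + 1 ∈ Λ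
    · rw [if_pos hp] at e2; omega
    · rw [if_neg hp] at e2; omega

lemma p_cond (hΛ : IsAP Λ) (hα : Monotone α) (hβ : Monotone β) (hγ : Monotone γ)
    (h01 : ∀ i, β i ≤ α i + 1) (hag : α ≤ γ) (hgb : γ ≤ β)
    (h1 : α = dispMinus Λ γ) (h2 : β = dispPlus Λ γ) : Cond Λ α β := by
  refine ⟨?_, ?_, ?_⟩
  · intro i hi
    have e1 := congrFun h1 i
    have e2 := congrFun h2 i
    unfold dispMinus at e1
    unfold dispPlus at e2
    have hagi : α i ≤ γ i := hag i
    have hgbi : γ i ≤ β i := hgb i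
    rcases eq_or_lt_of_le hagi with hg | hg
    · by_cases h : Increasable γ i ∧ γ i + (i.val : ℤ) + 1 ∈ Λ
      · rw [hg]; exact h.2
      · exfalso; rw [if_neg h] at e2; omega
    · have hgi : γ i = α i + 1 := by have := h01 i; omega
      by_cases h : Decreasable γ i ∧ γ i + (i.val : ℤ) ∈ Λ
      · have := h.2
        rwa [show γ i + (i.val : ℤ) = α i + (i.val : ℤ) + 1 from by omega] at this
      · exfalso; rw [if_neg h] at e1; omega
  · intro i hi
    rintro ⟨hd, hmem⟩
    have e1 := congrFun h1 i
    unfold dispMinus at e1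
    have hagi : α i ≤ γ i := hag i
    have hgbi : γ i ≤ β i := hgb i
    have hgi : γ i = α i := by omega
    by_cases h : Decreasable γ i ∧ γ i + (i.val : ℤ) ∈ Λ
    · rw [if_pos h] at e1; omega
    · have hnd : ¬ Decreasable γ i := fun hd' => h ⟨hd', by rw [hgi]; exact hmem⟩
      rw [decreasable_iff hγ] at hnd
      push_neg at hnd
      obtain ⟨j, hj, hcon⟩ := hnd
      rw [decreasable_iff hβ] at hd
      have hbj := hd j hj
      have hgbj : γ j ≤ β j := hgb j
      omega
  · intro i hi
    rintro ⟨hu, hmem⟩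
    have e2 := congrFun h2 i
    unfold dispPlus at e2
    have hagi : α i ≤ γ i := hag i
    have hgbi : γ i ≤ β i := hgb i
    have hgi : γ i = α i := by omega
    by_cases h : Increasable γ i ∧ γ i + (i.val : ℤ) + 1 ∈ Λ
    · rw [if_pos h] at e2; omega
    · have hnu : ¬ Increasable γ i := fun hu' => h ⟨hu', by rw [hgi]; exact hmem⟩
      rw [increasable_iff hγ] at hnu
      push_neg at hnu
      obtain ⟨j, hj, hcon⟩ := hnu
      rw [increasable_iff hα] at hu
      have haj := hu j hj
      have hagj : α j ≤ γ j := hag j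
      omega

lemma cond_dispMinus (hΛ : IsAP Λ) (hα : Monotone α) (hβ : Monotone β) (hγ : Monotone γ)
    (hab : α ≤ β) (h01 : ∀ i, β i ≤ α i + 1) (hag : α ≤ γ) (hgb : γ ≤ β)
    (hC : Cond Λ α β) : α = dispMinus Λ γ := by
  obtain ⟨hA, hB, hB'⟩ := hC
  funext i
  unfold dispMinus
  have hagi : α i ≤ γ i := hag i
  have hgbi : γ i ≤ β i := hgb i
  by_cases hS : α i < β i
  · have hbi : β i = α i + 1 := by have := h01 i; omega
    have hmem := hA i hS
    rcases eq_or_lt_of_le hagi with hg | hg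
    · rw [if_neg, ← hg]
      rintro ⟨-, hmem'⟩
      rw [← hg] at hmem'
      exact ap_not_consec hΛ hmem' hmem
    · have hgi : γ i = α i + 1 := by omega
      rw [if_pos, hgi]
      · ring
      refine ⟨?_, by rw [hgi, show α i + 1 + (i.val : ℤ) = α i + (i.val : ℤ) + 1 from by ring]; exact hmem⟩
      rw [decreasable_iff hγ]
      intro j hj
      by_contra hcon
      push_neg at hcon
      have hji : j.val < i.val := hj
      have him : i.val - 1 < m := by omega
      set j' : Fin m := ⟨i.val - 1, him⟩ with hj'def
      have hj'v : (j'.val : ℤ) = (i.val : ℤ) - 1 := by simp only [hj'def]; omega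
      have hj'i : j' < i := by rw [Fin.lt_def]; simp only [hj'def]; omega
      have hjj' : j ≤ j' := by rw [Fin.le_def]; simp only [hj'def]; omega
      have l1 : γ j ≤ γ j' := hγ hjj'
      have l2 : γ j' ≤ γ i := hγ hj'i.le
      have hgj' : γ j' = α i + 1 := by omega
      have l3 : γ j' ≤ β j' := hgb j'
      have l4 : β j' ≤ β i := hβ hj'i.le
      have hbj' : β j' = α i + 1 := by omega
      have l5 : α j' ≤ α i := hα hj'i.le
      have l6 : β j' ≤ α j' + 1 := h01 j'
      have haj' : α j' = α i := by omega
      have hSj' : α j' < β j' := by omega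
      have hk := hA j' hSj'
      rw [show α j' + (j'.val : ℤ) + 1 = α i + (i.val : ℤ) from by omega] at hk
      exact ap_not_consec hΛ hk hmem
  · have habi : α i ≤ β i := hab i
    have hbi : β i = α i := by omega
    have hgi : γ i = α i := by omega
    rw [if_neg, hgi]
    rintro ⟨hd, hmem⟩
    rw [hgi] at hmem
    have hnd : ¬ Decreasable β i := fun hd' => hB i hbi.symm ⟨hd', hmem⟩
    rw [decreasable_iff hβ] at hnd
    push_neg at hnd
    obtain ⟨j, hj, hcon⟩ := hnd
    rw [decreasable_iff hγ] at hd
    have hji : j.val < i.val := hj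
    have him : i.val - 1 < m := by omega
    set j' : Fin m := ⟨i.val - 1, him⟩ with hj'def
    have hj'v : (j'.val : ℤ) = (i.val : ℤ) - 1 := by simp only [hj'def]; omega
    have hj'i : j' < i := by rw [Fin.lt_def]; simp only [hj'def]; omega
    have hjj' : j ≤ j' := by rw [Fin.le_def]; simp only [hj'def]; omega
    have l1 : β j ≤ β j' := hβ hjj'
    have l2 : β j' ≤ β i := hβ hj'i.le
    have hbj' : β j' = α i := by omega
    have hgj' := hd j' hj'i
    have l3 : α j' ≤ γ j' := hag j'
    have l4 : β j' ≤ α j' + 1 := h01 j'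
    have haj' : α j' = α i - 1 := by omega
    have hSj' : α j' < β j' := by omega
    have hk := hA j' hSj'
    rw [show α j' + (j'.val : ℤ) + 1 = α i + (i.val : ℤ) - 1 from by omega] at hk
    exact ap_not_consec hΛ hk (by rwa [show α i + (i.val : ℤ) - 1 + 1 = α i + (i.val : ℤ) from by ring])

lemma cond_dispPlus (hΛ : IsAP Λ) (hα : Monotone α) (hβ : Monotone β) (hγ : Monotone γ)
    (hab : α ≤ β) (h01 : ∀ i, β i ≤ α i + 1) (hag : α ≤ γ) (hgb : γ ≤ β)
    (hC : Cond Λ α β) : β = dispPlus Λ γ := by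
  obtain ⟨hA, hB, hB'⟩ := hC
  funext i
  unfold dispPlus
  have hagi : α i ≤ γ i := hag i
  have hgbi : γ i ≤ β i := hgb i
  by_cases hS : α i < β i
  · have hbi : β i = α i + 1 := by have := h01 i; omega
    have hmem := hA i hS
    rcases eq_or_lt_of_le hagi with hg | hg
    · rw [if_pos, ← hg, hbi]
      refine ⟨?_, by rw [← hg]; exact hmem⟩
      rw [increasable_iff hγ]
      intro j hj
      by_contra hcon
      push_neg at hcon
      have hij : i.val < j.val := hj
      have him : i.val + 1 < m := lt_of_le_of_lt (Nat.succ_le_of_lt hij) j.isLt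
      set j' : Fin m := ⟨i.val + 1, him⟩ with hj'def
      have hj'v : (j'.val : ℤ) = (i.val : ℤ) + 1 := by simp only [hj'def]; push_cast; ring
      have hij' : i < j' := by rw [Fin.lt_def]; simp only [hj'def]; omega
      have hj'j : j' ≤ j := by rw [Fin.le_def]; simp only [hj'def]; omega
      have l1 : γ j' ≤ γ j := hγ hj'j
      have l2 : γ i ≤ γ j' := hγ hij'.le
      have hgj' : γ j' = α i := by omega
      have l3 : α j' ≤ γ j' := hag j'
      have l4 : α i ≤ α j' := hα hij'.le
      have haj' : α j' = α i := by omega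
      have l5 : β i ≤ β j' := hβ hij'.le
      have l6 : β j' ≤ α j' + 1 := h01 j'
      have hbj' : β j' = α i + 1 := by omega
      have hSj' : α j' < β j' := by omega
      have hk := hA j' hSj'
      rw [show α j' + (j'.val : ℤ) + 1 = α i + (i.val : ℤ) + 1 + 1 from by omega] at hk
      exact ap_not_consec hΛ hmem hk
    · have hgi : γ i = α i + 1 := by omega
      rw [if_neg, hgi, hbi]
      rintro ⟨-, hmem'⟩
      rw [show γ i + (i.val : ℤ) + 1 = α i + (i.val : ℤ) + 1 + 1 from by omega] at hmem'
      exact ap_not_consec hΛ hmem hmem'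
  · have habi : α i ≤ β i := hab i
    have hbi : β i = α i := by omega
    have hgi : γ i = α i := by omega
    rw [if_neg, hgi, hbi]
    rintro ⟨hu, hmem⟩
    rw [hgi] at hmem
    have hnu : ¬ Increasable α i := fun hu' => hB' i hbi.symm ⟨hu', hmem⟩
    rw [increasable_iff hα] at hnu
    push_neg at hnu
    obtain ⟨j, hj, hcon⟩ := hnu
    rw [increasable_iff hγ] at hu
    have hij : i.val < j.val := hj
    have him : i.val + 1 < m := lt_of_le_of_lt (Nat.succ_le_of_lt hij) j.isLt
    set j' : Fin m := ⟨i.val + 1, him⟩ with hj'def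
    have hj'v : (j'.val : ℤ) = (i.val : ℤ) + 1 := by simp only [hj'def]; push_cast; ring
    have hij' : i < j' := by rw [Fin.lt_def]; simp only [hj'def]; omega
    have hj'j : j' ≤ j := by rw [Fin.le_def]; simp only [hj'def]; omega
    have l1 : α i ≤ α j' := hα hij'.le
    have l2 : α j' ≤ α j := hα hj'j
    have haj' : α j' = α i := by omega
    have hgj' := hu j' hij'
    have l3 : γ j' ≤ β j' := hgb j'
    have l4 : β j' ≤ α j' + 1 := h01 j'
    have hbj' : β j' = α i + 1 := by omega
    have hSj' : α j' < β j' := by omega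
    have hk := hA j' hSj'
    rw [show α j' + (j'.val : ℤ) + 1 = α i + (i.val : ℤ) + 1 + 1 from by omega] at hk
    exact ap_not_consec hΛ hmem hk

end Main


/-- Criterion for linkage: for `α < β` and an arithmetic progression `Λ`, the following are
equivalent: (1) `α, β` are linked by `Λ`; (2) some ramification sequence `γ` with
`α ≤ γ ≤ β` satisfies `α = disp⁻_Λ(γ)` and `β = disp⁺_Λ(γ)`; (3) every ramification
sequence `γ` with `α ≤ γ ≤ β` satisfies `α = disp⁻_Λ(γ)` and `β = disp⁺_Λ(γ)`. -/
theorem linked_criterion (r : ℕ) (α β : Fin (r+1) → ℤ) (hα : Monotone α) (hβ : Monotone β)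
    (hab : α ≤ β) (hne : α ≠ β) (Λ : Set ℤ) (hΛ : IsAP Λ) :
    (LinkedBy Λ α β ↔
      ∃ γ : Fin (r+1) → ℤ, Monotone γ ∧ α ≤ γ ∧ γ ≤ β ∧
        α = dispMinus Λ γ ∧ β = dispPlus Λ γ) ∧
    (LinkedBy Λ α β ↔
      ∀ γ : Fin (r+1) → ℤ, Monotone γ → α ≤ γ → γ ≤ β →
        α = dispMinus Λ γ ∧ β = dispPlus Λ γ) := by
  constructor
  · constructor
    · intro hL
      have h01 := h01_of_linked hL
      have hC := linked_cond hL
      exact ⟨α, hα, le_refl α, hab,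
        cond_dispMinus hΛ hα hβ hα hab h01 (le_refl α) hab hC,
        cond_dispPlus hΛ hα hβ hα hab h01 (le_refl α) hab hC⟩
    · rintro ⟨γ, hγ, hag, hgb, h1, h2⟩
      have h01 := h01_of_p hΛ hag hgb h1 h2
      have hC := p_cond hΛ hα hβ hγ h01 hag hgb h1 h2
      exact ⟨cond_dispMinus hΛ hα hβ hβ hab h01 hab (le_refl β) hC,
        cond_dispPlus hΛ hα hβ hα hab h01 (le_refl α) hab hC⟩
  · constructor
    · intro hL γ hγ hag hgb
      have h01 := h01_of_linked hL
      have hC := linked_cond hL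
      exact ⟨cond_dispMinus hΛ hα hβ hγ hab h01 hag hgb hC,
        cond_dispPlus hΛ hα hβ hγ hab h01 hag hgb hC⟩
    · intro h
      exact ⟨(h β hβ hab (le_refl β)).1, (h α hα (le_refl α) hab).2⟩
end

section
/- Let n, a, b, c be integers with n > a ≥ b > c ≥ 0 and a−c ≥ ⌊n/2⌋ ≥ c. Then τ^n_{a+1,b,c+1} / τ^n_{a,b,c} is a 2-link. -/
/-- The rank-`(n-1)` ramification sequence `τ^n_{a,b,c} = 0^{n-a} 1^{a-b} 2^{b-c} 3^c`. -/
def tau (n a b c : ℕ) : Fin n → ℤ :=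
  fun i => if i.val < n - a then 0 else if i.val < n - b then 1 else
    if i.val < n - c then 2 else 3

private lemma tau_mono' (n a b c : ℕ) : Monotone (tau n a b c) := by
  intro i j hij
  have h := Fin.le_def.mp hij
  simp only [tau]
  split_ifs <;> omega

private lemma update_tau_eq' (n a b c a' b' c' : ℕ) (i : Fin n) (v : ℤ)
    (hv : v = tau n a' b' c' i)
    (hoff : ∀ j : Fin n, j.val ≠ i.val → tau n a b c j = tau n a' b' c' j) :
    Function.update (tau n a b c) i v = tau n a' b' c' := by
  funext j
  rcases eq_or_ne j i with rfl | h
  · rw [Function.update_self, hv]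
  · rw [Function.update_of_ne h, hoff j (fun hh => h (Fin.ext hh))]

set_option maxHeartbeats 1600000 in
/-- If `n > a ≥ b > c ≥ 0` and `a−c ≥ ⌊n/2⌋ ≥ c`, then
`τ^n_{a+1,b,c+1} / τ^n_{a,b,c}` is a 2-link. -/
theorem tau_two_link_floor (n a b c : ℕ) (h1 : a < n) (h2 : b ≤ a) (h3 : c < b)
    (h4 : n / 2 ≤ a - c) (h5 : c ≤ n / 2) :
    IsNLink 2 (tau n a b c) (tau n (a+1) b (c+1)) := by
  have hca : c < a := lt_of_lt_of_le h3 h2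
  set Λ : Set ℤ := {x : ℤ | ∃ k : ℤ, x = ((n:ℤ) - a) + ((a:ℤ) - c + 2) * k} with hΛdef
  have hM : (2:ℤ) ≤ (a:ℤ) - c + 2 := by omega
  have k1 : (n:ℤ) - a < (a:ℤ) - c + 2 := by omega
  have k2 : 2*(c:ℤ) ≤ (a:ℤ) := by omega
  have k3 : 1 ≤ (n:ℤ) - a := by omega
  have memiff : ∀ x : ℤ, 0 ≤ x → x ≤ (n:ℤ) + 3 →
      (x ∈ Λ ↔ x = (n:ℤ) - a ∨ x = (n:ℤ) - c + 2) := by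
    intro x hx0 hxn
    constructor
    · rintro ⟨k, rfl⟩
      have hk0 : 0 ≤ k := by
        by_contra hk
        push_neg at hk
        have hmul : ((a:ℤ) - c + 2) * k ≤ ((a:ℤ) - c + 2) * (-1) :=
          mul_le_mul_of_nonneg_left (by omega) (by omega)
        nlinarith
      have hk1 : k ≤ 1 := by
        by_contra hk
        push_neg at hk
        have hmul : ((a:ℤ) - c + 2) * 2 ≤ ((a:ℤ) - c + 2) * k :=
          mul_le_mul_of_nonneg_left (by omega) (by omega)
        nlinarith
      rcases (by omega : k = 0 ∨ k = 1) with rfl | rfl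
      · left; ring
      · right; ring
    · rintro (rfl | rfl)
      · exact ⟨0, by ring⟩
      · exact ⟨1, by ring⟩
  have hAP : IsAP Λ := by
    refine ⟨?_, Or.inr (Or.inr ⟨(n:ℤ) - a, (a:ℤ) - c + 2, hM, rfl⟩)⟩
    intro h
    have hmem : ((n:ℤ) - a + 1) ∈ Λ := h ▸ Set.mem_univ _
    obtain ⟨k, hk⟩ := hmem
    have hd : ((a:ℤ) - c + 2) ∣ 1 := ⟨k, by linarith⟩
    have := Int.le_of_dvd one_pos hd
    omega
  obtain ⟨iA, hiA⟩ : ∃ j : Fin n, j.val = n - a - 1 := ⟨⟨n - a - 1, by omega⟩, rfl⟩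
  obtain ⟨iC, hiC⟩ : ∃ j : Fin n, j.val = n - c - 1 := ⟨⟨n - c - 1, by omega⟩, rfl⟩
  have e1 : Function.update (tau n a b c) iA (tau n a b c iA + 1) = tau n (a+1) b c := by
    apply update_tau_eq'
    · simp only [tau]; split_ifs <;> omega
    · intro j hj; simp only [tau]; split_ifs <;> omega
  have e2 : Function.update (tau n a b c) iC (tau n a b c iC + 1) = tau n a b (c+1) := by
    apply update_tau_eq'
    · simp only [tau]; split_ifs <;> omega
    · intro j hj; simp only [tau]; split_ifs <;> omega
  have e3 : Function.update (tau n (a+1) b (c+1)) iA (tau n (a+1) b (c+1) iA - 1)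
      = tau n a b (c+1) := by
    apply update_tau_eq'
    · simp only [tau]; split_ifs <;> omega
    · intro j hj; simp only [tau]; split_ifs <;> omega
  have e4 : Function.update (tau n (a+1) b (c+1)) iC (tau n (a+1) b (c+1) iC - 1)
      = tau n (a+1) b c := by
    apply update_tau_eq'
    · simp only [tau]; split_ifs <;> omega
    · intro j hj; simp only [tau]; split_ifs <;> omega
  have incA : Increasable (tau n a b c) iA := by
    unfold Increasable; rw [e1]; exact tau_mono' n (a+1) b c
  have incC : Increasable (tau n a b c) iC := by
    unfold Increasable; rw [e2]; exact tau_mono' n a b (c+1)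
  have decA : Decreasable (tau n (a+1) b (c+1)) iA := by
    unfold Decreasable; rw [e3]; exact tau_mono' n a b (c+1)
  have decC : Decreasable (tau n (a+1) b (c+1)) iC := by
    unfold Decreasable; rw [e4]; exact tau_mono' n (a+1) b c
  have tlb : ∀ (a' b' c' : ℕ) (i : Fin n), 0 ≤ tau n a' b' c' i ∧ tau n a' b' c' i ≤ 3 := by
    intro a' b' c' i; simp only [tau]; split_ifs <;> norm_num
  have tchar : ∀ (a' b' c' : ℕ) (i : Fin n),
      (i.val < n - a' ∧ tau n a' b' c' i = 0) ∨
      (¬ i.val < n - a' ∧ i.val < n - b' ∧ tau n a' b' c' i = 1) ∨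
      (¬ i.val < n - a' ∧ ¬ i.val < n - b' ∧ i.val < n - c' ∧ tau n a' b' c' i = 2) ∨
      (¬ i.val < n - a' ∧ ¬ i.val < n - b' ∧ ¬ i.val < n - c' ∧ tau n a' b' c' i = 3) := by
    intro a' b' c' i; simp only [tau]; split_ifs with p q r
    · exact Or.inl ⟨p, rfl⟩
    · exact Or.inr (Or.inl ⟨p, q, rfl⟩)
    · exact Or.inr (Or.inr (Or.inl ⟨p, q, r, rfl⟩))
    · exact Or.inr (Or.inr (Or.inr ⟨p, q, r, rfl⟩))
  have hplus : tau n (a+1) b (c+1) = dispPlus Λ (tau n a b c) := by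
    funext i
    have hin := i.isLt
    unfold dispPlus
    by_cases hA : i.val = n - a - 1
    · rw [show i = iA from Fin.ext (hA.trans hiA.symm)]
      have hv : tau n a b c iA = 0 := by simp only [tau]; split_ifs <;> omega
      have hm : tau n a b c iA + (iA.val : ℤ) + 1 ∈ Λ := by
        rw [hv]; exact ⟨0, by rw [mul_zero]; omega⟩
      rw [if_pos ⟨incA, hm⟩]
      simp only [tau]; split_ifs <;> omega
    · by_cases hC : i.val = n - c - 1
      · rw [show i = iC from Fin.ext (hC.trans hiC.symm)]
        have hv : tau n a b c iC = 2 := by simp only [tau]; split_ifs <;> omega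
        have hm : tau n a b c iC + (iC.val : ℤ) + 1 ∈ Λ := by
          rw [hv]; exact ⟨1, by rw [mul_one]; omega⟩
        rw [if_pos ⟨incC, hm⟩]
        simp only [tau]; split_ifs <;> omega
      · rw [if_neg]
        · simp only [tau]; split_ifs <;> omega
        rintro ⟨-, hm⟩
        have hb := tlb a b c i
        rw [memiff _ (by omega) (by omega)] at hm
        rcases tchar a b c i with ⟨ha1, hv⟩ | ⟨ha1, ha2, hv⟩ | ⟨ha1, ha2, ha3, hv⟩ |
            ⟨ha1, ha2, ha3, hv⟩ <;>
          rw [hv] at hm <;> rcases hm with hm | hm <;> omega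
  have hminus : tau n a b c = dispMinus Λ (tau n (a+1) b (c+1)) := by
    funext i
    have hin := i.isLt
    unfold dispMinus
    by_cases hA : i.val = n - a - 1
    · rw [show i = iA from Fin.ext (hA.trans hiA.symm)]
      have hv : tau n (a+1) b (c+1) iA = 1 := by simp only [tau]; split_ifs <;> omega
      have hm : tau n (a+1) b (c+1) iA + (iA.val : ℤ) ∈ Λ := by
        rw [hv]; exact ⟨0, by rw [mul_zero]; omega⟩
      rw [if_pos ⟨decA, hm⟩]
      simp only [tau]; split_ifs <;> omega
    · by_cases hC : i.val = n - c - 1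
      · rw [show i = iC from Fin.ext (hC.trans hiC.symm)]
        have hv : tau n (a+1) b (c+1) iC = 3 := by simp only [tau]; split_ifs <;> omega
        have hm : tau n (a+1) b (c+1) iC + (iC.val : ℤ) ∈ Λ := by
          rw [hv]; exact ⟨1, by rw [mul_one]; omega⟩
        rw [if_pos ⟨decC, hm⟩]
        simp only [tau]; split_ifs <;> omega
      · rw [if_neg]
        · simp only [tau]; split_ifs <;> omega
        rintro ⟨-, hm⟩
        have hb := tlb (a+1) b (c+1) i
        rw [memiff _ (by omega) (by omega)] at hm
        rcases tchar (a+1) b (c+1) i with ⟨ha1, hv⟩ | ⟨ha1, ha2, hv⟩ | ⟨ha1, ha2, ha3, hv⟩ |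
            ⟨ha1, ha2, ha3, hv⟩ <;>
          rw [hv] at hm <;> rcases hm with hm | hm <;> omega
  refine ⟨⟨Λ, hAP, hminus, hplus⟩, ?_⟩
  have hdiff : ∀ i : Fin n, tau n (a+1) b (c+1) i - tau n a b c i =
      (if i = iA then 1 else 0) + (if i = iC then 1 else 0) := by
    intro i
    by_cases hA : i = iA
    · subst hA
      rw [if_pos rfl, if_neg (fun h => absurd (congrArg Fin.val h) (by omega))]
      simp only [tau]; split_ifs <;> omega
    · rw [if_neg hA]
      by_cases hC : i = iC
      · subst hC
        rw [if_pos rfl]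
        simp only [tau]; split_ifs <;> omega
      · rw [if_neg hC]
        have h1' : i.val ≠ iA.val := fun h => hA (Fin.ext h)
        have h2' : i.val ≠ iC.val := fun h => hC (Fin.ext h)
        simp only [tau]; split_ifs <;> omega
  unfold skewSize
  rw [Finset.sum_congr rfl (fun i _ => hdiff i), Finset.sum_add_distrib,
    Finset.sum_ite_eq' Finset.univ iA (fun _ => (1:ℤ)),
    Finset.sum_ite_eq' Finset.univ iC (fun _ => (1:ℤ))]
  simp
end

section
/- For every odd integer n ≥ 5, the skew shape τ^n_{n, ⌈n/2⌉, ⌊n/2⌋} / τ^n_{n−1, ⌊n/2⌋, ⌊n/2⌋} is a 2-link. -/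
/-- A four-step nondecreasing step function on `Fin m` is monotone. -/
lemma mono4 {m : ℕ} (f : Fin m → ℤ) (c1 c2 c3 c4 : ℤ) (t1 t2 t3 : ℕ)
    (hc1 : c1 ≤ c2) (hc2 : c2 ≤ c3) (hc3 : c3 ≤ c4)
    (h : ∀ i : Fin m, f i = if i.val < t1 then c1 else if i.val < t2 then c2 else
      if i.val < t3 then c3 else c4) : Monotone f := by
  intro a b hab
  have hab' : a.val ≤ b.val := hab
  rw [h, h]
  split_ifs <;> omega

/-- For every odd integer `n ≥ 5`, the skew shape
`τ^n_{n, ⌈n/2⌉, ⌊n/2⌋} / τ^n_{n−1, ⌊n/2⌋, ⌊n/2⌋}` is a 2-link. -/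
theorem tau_two_link_odd (n : ℕ) (hodd : Odd n) (h5 : 5 ≤ n) :
    IsNLink 2 (tau n (n-1) (n/2) (n/2)) (tau n n ((n+1)/2) (n/2)) := by
  obtain ⟨k, hn⟩ : ∃ k, n = 2*k+1 := by
    obtain ⟨t, ht⟩ := hodd; exact ⟨t, by omega⟩
  have hk : 2 ≤ k := by omega
  have h0n : 0 < n := by omega
  have hkn : k < n := by omega
  set A := tau n (n-1) (n/2) (n/2) with hAdef
  set B := tau n n ((n+1)/2) (n/2) with hBdef
  have hA : ∀ i : Fin n, A i = if i.val = 0 then 0 else if i.val ≤ k then 1 else 3 := by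
    intro i
    have := i.isLt
    simp only [hAdef, tau]
    split_ifs <;> omega
  have hB : ∀ i : Fin n, B i = if i.val < k then 1 else if i.val = k then 2 else 3 := by
    intro i
    have := i.isLt
    simp only [hBdef, tau]
    split_ifs <;> omega
  set Λ : Set ℤ := {x : ℤ | ∃ j : ℤ, x = 1 + ((k:ℤ)+1) * j} with hΛdef
  have hmem1 : (1:ℤ) ∈ Λ := by rw [hΛdef]; exact ⟨0, by ring⟩
  have hmem2 : ((k:ℤ)+2) ∈ Λ := by rw [hΛdef]; exact ⟨1, by ring⟩
  have hdvd : ∀ x : ℤ, x ∈ Λ → ((k:ℤ)+1) ∣ (x - 1) := by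
    rw [hΛdef]; rintro x ⟨j, rfl⟩; exact ⟨j, by ring⟩
  have hk' : (2:ℤ) ≤ (k:ℤ) := by exact_mod_cast hk
  have hnm3 : ((k:ℤ)+4) ∉ Λ := by
    intro h
    have hd := hdvd _ h
    have h2' : ((k:ℤ)+1) ∣ 2 := by
      have := dvd_sub hd (dvd_refl ((k:ℤ)+1))
      have e : ((k:ℤ)+4-1) - ((k:ℤ)+1) = 2 := by ring
      rwa [e] at this
    have := Int.le_of_dvd (by norm_num) h2'
    omega
  have hnm4 : (2*(k:ℤ)+4) ∉ Λ := by
    intro h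
    have hd := hdvd _ h
    have h2' : ((k:ℤ)+1) ∣ 1 := by
      have := dvd_sub hd (Dvd.intro 2 (by ring) : ((k:ℤ)+1) ∣ 2*((k:ℤ)+1))
      have e : (2*(k:ℤ)+4-1) - (2*((k:ℤ)+1)) = 1 := by ring
      rwa [e] at this
    have := Int.le_of_dvd (by norm_num) h2'
    omega
  have hnm0 : (0:ℤ) ∉ Λ := by
    intro h
    have hd := hdvd _ h
    have h2' : ((k:ℤ)+1) ∣ 1 := by
      have : ((k:ℤ)+1) ∣ -1 := by rwa [show (0:ℤ)-1 = -1 by ring] at hd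
      exact (dvd_neg).mp this
    have := Int.le_of_dvd (by norm_num) h2'
    omega
  have hAP : IsAP Λ := by
    constructor
    · intro h
      exact hnm0 (h ▸ Set.mem_univ (0:ℤ))
    · exact Or.inr (Or.inr ⟨1, (k:ℤ)+1, by omega, hΛdef⟩)
  refine ⟨⟨Λ, hAP, ?_, ?_⟩, ?_⟩
  · -- A = dispMinus Λ B
    funext i
    obtain ⟨iv, hlt⟩ := i
    simp only [dispMinus]
    by_cases h0 : iv = 0
    · rw [if_pos]
      · simp only [hA, hB, Fin.val_mk]; split_ifs <;> omega
      constructor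
      · unfold Decreasable
        apply mono4 _ 0 1 2 3 1 k (k+1) (by norm_num) (by norm_num) (by norm_num)
        intro j
        rw [Function.update_apply]
        simp only [hB, Fin.ext_iff, Fin.val_mk]
        split_ifs <;> omega
      · have hBv : B ⟨iv, hlt⟩ = 1 := by
          rw [hB]; simp only [Fin.val_mk]; split_ifs <;> omega
        rw [hBv]
        have e : (1:ℤ) + ((⟨iv, hlt⟩ : Fin n).val : ℤ) = 1 := by
          simp only [Fin.val_mk]; omega
        rw [e]
        exact hmem1
    · by_cases hkc : iv = k
      · rw [if_pos]
        · simp only [hA, hB, Fin.val_mk]; split_ifs <;> omega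
        constructor
        · unfold Decreasable
          apply mono4 _ 1 1 1 3 0 0 (k+1) (by norm_num) (by norm_num) (by norm_num)
          intro j
          rw [Function.update_apply]
          simp only [hB, Fin.ext_iff, Fin.val_mk]
          split_ifs <;> omega
        · have hBv : B ⟨iv, hlt⟩ = 2 := by
            rw [hB]; simp only [Fin.val_mk]; split_ifs <;> omega
          rw [hBv]
          have e : (2:ℤ) + ((⟨iv, hlt⟩ : Fin n).val : ℤ) = (k:ℤ)+2 := by
            simp only [Fin.val_mk]; omega
          rw [e]
          exact hmem2
      · by_cases hk1 : iv = k+1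
        · rw [if_neg]
          · simp only [hA, hB, Fin.val_mk]; split_ifs <;> omega
          rintro ⟨-, hmemx⟩
          have hBv : B ⟨iv, hlt⟩ = 3 := by
            rw [hB]; simp only [Fin.val_mk]; split_ifs <;> omega
          rw [hBv] at hmemx
          have e : (3:ℤ) + ((⟨iv, hlt⟩ : Fin n).val : ℤ) = (k:ℤ)+4 := by
            simp only [Fin.val_mk]; omega
          rw [e] at hmemx
          exact hnm3 hmemx
        · -- generic case: not decreasable
          rw [if_neg]
          · simp only [hA, hB, Fin.val_mk]; split_ifs <;> omega
          rintro ⟨hm, -⟩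
          have hle : (⟨iv-1, by omega⟩ : Fin n) ≤ (⟨iv, hlt⟩ : Fin n) := by
            simp only [Fin.mk_le_mk]; omega
          have hcmp := hm hle
          simp only [Function.update_apply, Fin.mk.injEq, hB, Fin.val_mk] at hcmp
          split_ifs at hcmp <;> omega
  · -- B = dispPlus Λ A
    funext i
    obtain ⟨iv, hlt⟩ := i
    simp only [dispPlus]
    by_cases h0 : iv = 0
    · rw [if_pos]
      · simp only [hA, hB, Fin.val_mk]; split_ifs <;> omega
      constructor
      · unfold Increasable
        apply mono4 _ 1 1 1 3 0 0 (k+1) (by norm_num) (by norm_num) (by norm_num)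
        intro j
        rw [Function.update_apply]
        simp only [hA, Fin.ext_iff, Fin.val_mk]
        split_ifs <;> omega
      · have hAv : A ⟨iv, hlt⟩ = 0 := by
          rw [hA]; simp only [Fin.val_mk]; split_ifs <;> omega
        rw [hAv]
        have e : (0:ℤ) + ((⟨iv, hlt⟩ : Fin n).val : ℤ) + 1 = 1 := by
          simp only [Fin.val_mk]; omega
        rw [e]
        exact hmem1
    · by_cases hkc : iv = k
      · rw [if_pos]
        · simp only [hA, hB, Fin.val_mk]; split_ifs <;> omega
        constructor
        · unfold Increasable
          apply mono4 _ 0 1 2 3 1 k (k+1) (by norm_num) (by norm_num) (by norm_num)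
          intro j
          rw [Function.update_apply]
          simp only [hA, Fin.ext_iff, Fin.val_mk]
          split_ifs <;> omega
        · have hAv : A ⟨iv, hlt⟩ = 1 := by
            rw [hA]; simp only [Fin.val_mk]; split_ifs <;> omega
          rw [hAv]
          have e : (1:ℤ) + ((⟨iv, hlt⟩ : Fin n).val : ℤ) + 1 = (k:ℤ)+2 := by
            simp only [Fin.val_mk]; omega
          rw [e]
          exact hmem2
      · by_cases hk1 : iv = 2*k
        · rw [if_neg]
          · simp only [hA, hB, Fin.val_mk]; split_ifs <;> omega
          rintro ⟨-, hmemx⟩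
          have hAv : A ⟨iv, hlt⟩ = 3 := by
            rw [hA]; simp only [Fin.val_mk]; split_ifs <;> omega
          rw [hAv] at hmemx
          have e : (3:ℤ) + ((⟨iv, hlt⟩ : Fin n).val : ℤ) + 1 = 2*(k:ℤ)+4 := by
            simp only [Fin.val_mk]; omega
          rw [e] at hmemx
          exact hnm4 hmemx
        · -- generic case: not increasable
          rw [if_neg]
          · simp only [hA, hB, Fin.val_mk]; split_ifs <;> omega
          rintro ⟨hm, -⟩
          have hle : (⟨iv, hlt⟩ : Fin n) ≤ (⟨iv+1, by omega⟩ : Fin n) := by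
            simp only [Fin.mk_le_mk]; omega
          have hcmp := hm hle
          simp only [Function.update_apply, Fin.mk.injEq, hA, Fin.val_mk] at hcmp
          split_ifs at hcmp <;> omega
  · -- skewSize
    have key : ∀ i : Fin n, B i - A i =
        (if i = (⟨0, h0n⟩ : Fin n) then 1 else 0) + (if i = (⟨k, hkn⟩ : Fin n) then 1 else 0) := by
      intro i
      rw [hA, hB]
      simp only [Fin.ext_iff, Fin.val_mk]
      split_ifs <;> omega
    rw [skewSize]
    simp_rw [key]
    rw [Finset.sum_add_distrib, Finset.sum_ite_eq' Finset.univ, Finset.sum_ite_eq' Finset.univ]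
    simp
end

section
/- For every integer n ≥ 4, the displacement difficulties cδ((1 + τ^n_{⌈n/2⌉, ⌊n/2⌋, 0}) / τ^n_{⌊n/2⌋, ⌊n/2⌋, 0}) and cδ((1 + τ^n_{⌊n/2⌋, ⌊n/2⌋, 0}) / τ^n_{⌈n/2⌉, ⌊n/2⌋, 0}) are both equal to 0; equivalently, in each case there is a chain of 2-links from the lower sequence to the upper one. -/
/-- A link chain of length `k` from `α` to `β`: a sequence `α = γ⁰ < γ¹ < ⋯ < γᵏ = β` of
ramification sequences in which each consecutive step is a 1-link or a 2-link. -/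
def IsLinkChain {m : ℕ} (α β : Fin m → ℤ) (k : ℕ) (γ : Fin (k+1) → Fin m → ℤ) : Prop :=
  γ 0 = α ∧ γ (Fin.last k) = β ∧ (∀ j, Monotone (γ j)) ∧
    ∀ j : Fin k, IsNLink 1 (γ j.castSucc) (γ j.succ) ∨ IsNLink 2 (γ j.castSucc) (γ j.succ)

/-- The chain threshold `ct(β/α)`: the minimum length of a link chain from `α` to `β`. -/
noncomputable def chainThreshold {m : ℕ} (α β : Fin m → ℤ) : ℕ :=
  sInf {k | ∃ γ : Fin (k+1) → Fin m → ℤ, IsLinkChain α β k γ}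

/-- The displacement difficulty `cδ(β/α) = 2·ct(β/α) − |β/α|`. -/
noncomputable def cdelta {m : ℕ} (α β : Fin m → ℤ) : ℤ :=
  2 * (chainThreshold α β : ℤ) - skewSize α β
/-! Each skew shape is tiled by 2-links, and since a link adds at most two boxes, a chain of
2-links has the least possible length `|β/α| / 2`, so `cδ = 0`.

In `τ^n_{a,b,c}` the last `0` and the last `2` are addable boxes on the diagonals `n - a` and
`n - c + 2` (the diagonal of entry `i` being `α_i + i`). When `a` is large compared with `n` and
`c`, the progression through these two diagonals with difference `a - c + 2` meets no other
addable corner of `τ^n_{a,b,c}` and no other removable corner of `τ^n_{a+1,b,c+1}`, so raising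
both boxes is a 2-link. Iterating `b` times leads from `τ^n_{a,b,0}` to `τ^n_{a+b,b,b}`, which is
`1 + τ^n_{a,b,0}` when `a + b = n`. This settles both cases for even `n` and the second one for
odd `n = 2p + 1`; in the first odd case the chain stops at `0 1^p 3^p`, and one more 2-link, raising
the `0` and the last `1` along `1 + (p + 1)ℤ`, reaches `1^p 2 3^p`. -/

section Corners

variable {m : ℕ} {α β : Fin m → ℤ}

theorem increasable_iff_lt_succ (hα : Monotone α) (i : Fin m) :
    Increasable α i ↔ ∀ h : i.val + 1 < m, α i < α ⟨i.val + 1, h⟩ := by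
  constructor
  · intro hI h
    have := hI (show i ≤ ⟨i.val + 1, h⟩ from Fin.le_def.mpr (Nat.le_succ _))
    simpa [Function.update_apply, Fin.ext_iff, Int.add_one_le_iff] using this
  · intro hlt x y hxy
    simp only [Function.update_apply]
    split_ifs with hx hy hy
    · simp
    · subst hx
      have hxy' : x.val + 1 ≤ y.val := lt_of_le_of_ne hxy (Ne.symm hy) |> Fin.lt_def.mp
      have := hα (show (⟨x.val + 1, by omega⟩ : Fin m) ≤ y from Fin.le_def.mpr hxy')
      linarith [hlt (by omega)]
    · subst hy; linarith [hα hxy]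
    · exact hα hxy

theorem decreasable_iff_pred_lt (hα : Monotone α) (i : Fin m) :
    Decreasable α i ↔ ∀ h : 0 < i.val, α ⟨i.val - 1, by omega⟩ < α i := by
  constructor
  · intro hD h
    have := hD (show (⟨i.val - 1, by omega⟩ : Fin m) ≤ i from Fin.le_def.mpr (Nat.sub_le _ _))
    simp only [Function.update_apply, Fin.ext_iff, if_neg (show i.val - 1 ≠ i.val by omega),
      if_true] at this
    omega
  · intro hlt x y hxy
    simp only [Function.update_apply]
    split_ifs with hx hy hy
    · simp
    · subst hx; linarith [hα hxy]
    · subst hy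
      have hxi : x.val + 1 ≤ y.val := lt_of_le_of_ne hxy hx |> Fin.lt_def.mp
      have := hα (show x ≤ (⟨y.val - 1, by omega⟩ : Fin m) from Fin.le_def.mpr (by simp; omega))
      linarith [hlt (by omega)]
    · exact hα hxy

theorem linkedBy_of_corners {Λ : Set ℤ} (S : Finset (Fin m))
    (hβ : ∀ i, β i = α i + if i ∈ S then 1 else 0)
    (hplus : ∀ i, Increasable α i ∧ α i + i + 1 ∈ Λ ↔ i ∈ S)
    (hminus : ∀ i, Decreasable β i ∧ β i + i ∈ Λ ↔ i ∈ S) :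
    LinkedBy Λ α β := by
  constructor <;> funext i
  · simp only [dispMinus, hminus i]; rw [hβ i]; split_ifs <;> ring
  · simp only [dispPlus, hplus i]; rw [hβ i]; split_ifs <;> ring

theorem skewSize_eq_card (S : Finset (Fin m)) (hβ : ∀ i, β i = α i + if i ∈ S then 1 else 0) :
    skewSize α β = S.card := by
  simp [skewSize, hβ]

end Corners

def progression (A M : ℤ) : Set ℤ := {x | ∃ k, x = A + M * k}

theorem isAP_progression {M : ℤ} (hM : 2 ≤ M) (A : ℤ) : IsAP (progression A M) := by
  refine ⟨fun huniv => ?_, Or.inr (Or.inr ⟨A, M, hM, rfl⟩)⟩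
  obtain ⟨k, hk⟩ : A + 1 ∈ progression A M := huniv ▸ Set.mem_univ _
  rcases le_or_gt k 0 with hk0 | hk0 <;> nlinarith

theorem mem_progression_iff {A M x : ℤ} (hM : 0 < M) (hlo : A - M ≤ x) (hhi : x < A + 2 * M) :
    x ∈ progression A M ↔ x = A - M ∨ x = A ∨ x = A + M := by
  constructor
  · rintro ⟨k, rfl⟩
    have hk1 : -1 ≤ k := by by_contra! h; nlinarith
    have hk2 : k ≤ 1 := by by_contra! h; nlinarith
    interval_cases k
    · left; ring
    · right; left; ring
    · right; right; ring
  · rintro (h | h | h)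
    exacts [⟨-1, by linarith⟩, ⟨0, by linarith⟩, ⟨1, by linarith⟩]

section Chains

variable {m : ℕ}

theorem skewSize_add (α β γ : Fin m → ℤ) : skewSize α β + skewSize β γ = skewSize α γ := by
  simp only [skewSize, ← Finset.sum_add_distrib]
  exact Finset.sum_congr rfl fun _ _ => by ring

theorem skewSize_eq_sum_of_chain {k : ℕ} (γ : Fin (k + 1) → Fin m → ℤ) :
    skewSize (γ 0) (γ (Fin.last k)) = ∑ j : Fin k, skewSize (γ j.castSucc) (γ j.succ) := by
  induction k with
  | zero => simp [skewSize]
  | succ k ih =>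
    have h := ih (fun j => γ j.castSucc)
    simp only [Fin.castSucc_zero, ← Fin.succ_castSucc] at h
    rw [Fin.sum_univ_castSucc, ← h, Fin.succ_last, skewSize_add]

theorem skewSize_le_of_isLinkChain {α β : Fin m → ℤ} {k : ℕ} {γ : Fin (k + 1) → Fin m → ℤ}
    (hγ : IsLinkChain α β k γ) : skewSize α β ≤ 2 * k := by
  obtain ⟨rfl, rfl, -, hlink⟩ := hγ
  rw [skewSize_eq_sum_of_chain]
  calc ∑ j : Fin k, skewSize (γ j.castSucc) (γ j.succ) ≤ ∑ _j : Fin k, (2 : ℤ) :=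
        Finset.sum_le_sum fun j _ => by rcases hlink j with h | h <;> linarith [h.2]
    _ = 2 * k := by simp [mul_comm]

theorem cdelta_eq_zero_of_twoLinks (γ : ℕ → Fin m → ℤ) (k : ℕ) (hmono : ∀ j, Monotone (γ j))
    (hlink : ∀ j < k, IsNLink 2 (γ j) (γ (j + 1))) : cdelta (γ 0) (γ k) = 0 := by
  have hchain : IsLinkChain (γ 0) (γ k) k (fun j => γ j) :=
    ⟨rfl, rfl, fun j => hmono j, fun j => Or.inr (hlink j j.isLt)⟩
  have hsize : skewSize (γ 0) (γ k) = 2 * k := by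
    clear hchain
    induction k with
    | zero => simp [skewSize]
    | succ k ih =>
      rw [← skewSize_add _ (γ k), ih fun j hj => hlink j (by omega), (hlink k k.lt_succ_self).2]
      push_cast; ring
  have hct : chainThreshold (γ 0) (γ k) = k := by
    refine le_antisymm (Nat.sInf_le ⟨_, hchain⟩) (le_csInf ⟨k, _, hchain⟩ ?_)
    rintro k' ⟨γ', hγ'⟩
    have := skewSize_le_of_isLinkChain hγ'
    omega
  rw [cdelta, hct, hsize]; ring

end Chains

section Tau

variable {n : ℕ}

theorem tau_monotone (a b c : ℕ) : Monotone (tau n a b c) := by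
  intro x y hxy
  have : x.val ≤ y.val := hxy
  simp only [tau]; split_ifs <;> omega

theorem tau_bounds (a b c : ℕ) (i : Fin n) : 0 ≤ tau n a b c i ∧ tau n a b c i ≤ 3 := by
  simp only [tau]; split_ifs <;> omega

theorem one_add_tau (a b : ℕ) : (fun i => 1 + tau n a b 0 i) = tau n n a b := by
  funext i
  have := i.isLt
  simp only [tau]; split_ifs <;> omega

theorem isNLink_two_tau_raise_zero_two {a b c : ℕ} (hcb : c < b) (hba : b ≤ a) (han : a < n)
    (hca : 2 * c ≤ a) (hn : n + c < 2 * a + 2) :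
    IsNLink 2 (tau n a b c) (tau n (a + 1) b (c + 1)) := by
  set S : Finset (Fin n) := {⟨n - a - 1, by omega⟩, ⟨n - c - 1, by omega⟩}
  have hβ : ∀ i, tau n (a + 1) b (c + 1) i = tau n a b c i + if i ∈ S then 1 else 0 := by
    intro i
    simp only [S, tau, Finset.mem_insert, Finset.mem_singleton, Fin.ext_iff]
    split_ifs <;> omega
  refine ⟨⟨progression (n - a : ℤ) (a - c + 2), isAP_progression (by omega) _,
    linkedBy_of_corners S hβ (fun i => ?_) (fun i => ?_)⟩, ?_⟩
  · have := tau_bounds a b c i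
    rw [increasable_iff_lt_succ (tau_monotone a b c),
      mem_progression_iff (by omega) (by omega) (by omega)]
    simp only [S, tau, Finset.mem_insert, Finset.mem_singleton, Fin.ext_iff]
    split_ifs <;> omega
  · have := tau_bounds (n := n) (a + 1) b (c + 1) i
    rw [decreasable_iff_pred_lt (tau_monotone (a + 1) b (c + 1)),
      mem_progression_iff (by omega) (by omega) (by omega)]
    simp only [S, tau, Finset.mem_insert, Finset.mem_singleton, Fin.ext_iff]
    split_ifs <;> omega
  · rw [skewSize_eq_card S hβ, Finset.card_pair (by simp [Fin.ext_iff]; omega)]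
    rfl

theorem cdelta_tau_eq_zero {a b : ℕ} (hba : b ≤ a) (hab : a + b ≤ n) (hn : n ≤ 2 * a + 1) :
    cdelta (tau n a b 0) (tau n (a + b) b b) = 0 := by
  simpa using cdelta_eq_zero_of_twoLinks (fun j => tau n (a + j) b j) b
    (fun j => tau_monotone _ _ _) fun j hj =>
      isNLink_two_tau_raise_zero_two hj (by omega) (by omega) (by omega) (by omega)

end Tau

theorem isNLink_two_tau_raise_zero_one {p : ℕ} (hp : 2 ≤ p) :
    IsNLink 2 (tau (2 * p + 1) (2 * p) p p) (tau (2 * p + 1) (2 * p + 1) (p + 1) p) := by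
  set n := 2 * p + 1
  set S : Finset (Fin n) := {⟨0, by omega⟩, ⟨p, by omega⟩}
  have hβ : ∀ i, tau n (2 * p + 1) (p + 1) p i = tau n (2 * p) p p i + if i ∈ S then 1 else 0 := by
    intro i
    simp only [S, tau, Finset.mem_insert, Finset.mem_singleton, Fin.ext_iff]
    split_ifs <;> omega
  refine ⟨⟨progression (p + 2 : ℤ) (p + 1), isAP_progression (by omega) _,
    linkedBy_of_corners S hβ (fun i => ?_) (fun i => ?_)⟩, ?_⟩
  · have := tau_bounds (n := n) (2 * p) p p i
    rw [increasable_iff_lt_succ (tau_monotone _ _ _),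
      mem_progression_iff (by omega) (by omega) (by omega)]
    simp only [S, tau, Finset.mem_insert, Finset.mem_singleton, Fin.ext_iff]
    split_ifs <;> omega
  · have := tau_bounds n (p + 1) p i
    rw [decreasable_iff_pred_lt (tau_monotone _ _ _),
      mem_progression_iff (by omega) (by simp only [tau]; split_ifs <;> omega) (by omega)]
    simp only [S, tau, Finset.mem_insert, Finset.mem_singleton, Fin.ext_iff]
    split_ifs <;> omega
  · rw [skewSize_eq_card S hβ, Finset.card_pair (by simp [Fin.ext_iff]; omega)]
    rfl

theorem cdelta_tau_odd_eq_zero {p : ℕ} (hp : 2 ≤ p) :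
    cdelta (tau (2 * p + 1) p p 0) (tau (2 * p + 1) (2 * p + 1) (p + 1) p) = 0 := by
  let γ : ℕ → Fin (2 * p + 1) → ℤ := fun j =>
    if j ≤ p then tau _ (p + j) p j else tau _ (2 * p + 1) (p + 1) p
  have hlink : ∀ j < p + 1, IsNLink 2 (γ j) (γ (j + 1)) := by
    intro j hj
    rcases Nat.lt_or_ge j p with hjp | hjp
    · simp only [γ, if_pos hjp.le, if_pos (Nat.succ_le_of_lt hjp)]
      exact isNLink_two_tau_raise_zero_two (a := p + j) hjp (by omega) (by omega) (by omega)
        (by omega)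
    · obtain rfl : j = p := by omega
      simp only [γ, le_refl, if_true, Nat.not_succ_le_self, if_false, ← two_mul]
      exact isNLink_two_tau_raise_zero_one hp
  have hmono : ∀ j, Monotone (γ j) := fun j => by
    simp only [γ]; split_ifs <;> exact tau_monotone _ _ _
  simpa [γ] using cdelta_eq_zero_of_twoLinks γ (p + 1) hmono hlink

/-- For every `n ≥ 4`, the displacement difficulties
`cδ((1 + τ^n_{⌈n/2⌉,⌊n/2⌋,0}) / τ^n_{⌊n/2⌋,⌊n/2⌋,0})` and
`cδ((1 + τ^n_{⌊n/2⌋,⌊n/2⌋,0}) / τ^n_{⌈n/2⌉,⌊n/2⌋,0})` are both zero. -/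
theorem cdelta_floorCeil (n : ℕ) (h : 4 ≤ n) :
    cdelta (tau n (n/2) (n/2) 0) (fun i => 1 + tau n ((n+1)/2) (n/2) 0 i) = 0 ∧
    cdelta (tau n ((n+1)/2) (n/2) 0) (fun i => 1 + tau n (n/2) (n/2) 0 i) = 0 := by
  rw [one_add_tau, one_add_tau]
  obtain ⟨p, rfl | rfl⟩ : ∃ p, n = 2 * p ∨ n = 2 * p + 1 := ⟨n / 2, by omega⟩
  · have hceil : (2 * p + 1) / 2 = p := by omega
    have key := cdelta_tau_eq_zero (n := 2 * p) (a := p) (b := p) le_rfl (by omega) (by omega)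
    rw [← two_mul] at key
    simp only [hceil, Nat.mul_div_cancel_left p two_pos]
    exact ⟨key, key⟩
  · have hfloor : (2 * p + 1) / 2 = p := by omega
    have hceil : (2 * p + 1 + 1) / 2 = p + 1 := by omega
    have key := cdelta_tau_eq_zero (n := 2 * p + 1) (a := p + 1) (b := p) (by omega) (by omega)
      (by omega)
    rw [show p + 1 + p = 2 * p + 1 by omega] at key
    rw [hfloor, hceil]
    exact ⟨cdelta_tau_odd_eq_zero (by omega), key⟩
end

section
/- For any rank-r ramification sequences α ≤ β and any integer n, cδ(β/α) = cδ((n+β)/(n+α)) = cδ((n−α)/(n−β)). Moreover, for any rank-r ramification sequences α ≤ β ≤ γ, cδ(γ/α) ≤ cδ(γ/β) + cδ(β/α). -/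
/-! Translation `α ↦ n + α` and reflection `α ↦ n − α` preserve monotonicity, exchange
(in)creasability in the evident way, and carry displacement along `Λ` to displacement along the
image of `Λ` under an affine automorphism of `ℤ` (reflection swapping `disp⁺` and `disp⁻`). Affine
automorphisms preserve arithmetic progressions, so both maps send link chains to link chains of the
same length and keep `|β/α|`, hence `cδ`. Subadditivity holds because link chains concatenate,
once every `α ≤ β` admits a chain: raising the last entry where `α` falls short of `β` is a
1-link. -/

theorem IsAP.preimage_affine {Λ : Set ℤ} (h : IsAP Λ) {u : ℤ} (hu : IsUnit u) (c : ℤ) :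
    IsAP ((fun x => u * x + c) ⁻¹' Λ) := by
  have huu : u * u = 1 := Int.isUnit_mul_self hu
  obtain ⟨hne, hΛ⟩ := h
  refine ⟨fun huniv => hne ?_, ?_⟩
  · rw [Set.preimage_eq_univ_iff] at huniv
    exact Set.eq_univ_of_forall fun y =>
      huniv ⟨u * (y - c), by linear_combination (y - c) * huu⟩
  rcases hΛ with rfl | ⟨a, rfl⟩ | ⟨a, q, hq, rfl⟩
  · exact Or.inl Set.preimage_empty
  · refine Or.inr (Or.inl ⟨u * (a - c), Set.ext fun x => ?_⟩)
    simp only [Set.mem_preimage, Set.mem_singleton_iff]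
    exact ⟨fun hx => by linear_combination u * hx - x * huu,
      fun hx => by linear_combination u * hx + (a - c) * huu⟩
  · refine Or.inr (Or.inr ⟨u * (a - c), q, hq, Set.ext fun x => ?_⟩)
    simp only [Set.mem_preimage, Set.mem_ofPred_eq]
    exact ⟨fun ⟨k, hk⟩ => ⟨u * k, by linear_combination u * hk - x * huu⟩,
      fun ⟨k, hk⟩ => ⟨u * k, by linear_combination u * hk + (a - c) * huu⟩⟩

namespace RamificationSeq

open Function

variable {m : ℕ}

def translate (n : ℤ) (α : Fin m → ℤ) : Fin m → ℤ := fun i => n + α i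

def reflect (n : ℤ) (α : Fin m → ℤ) : Fin m → ℤ := fun i => n - α i.rev

@[simp] lemma translate_apply (n : ℤ) (α : Fin m → ℤ) (i : Fin m) :
    translate n α i = n + α i := rfl

@[simp] lemma reflect_apply (n : ℤ) (α : Fin m → ℤ) (i : Fin m) :
    reflect n α i = n - α i.rev := rfl

@[simp] lemma translate_neg_translate (n : ℤ) (α : Fin m → ℤ) :
    translate (-n) (translate n α) = α := by
  ext i; simp

@[simp] lemma reflect_reflect (n : ℤ) (α : Fin m → ℤ) : reflect n (reflect n α) = α := by
  ext i; simp

lemma translate_update (n : ℤ) (α : Fin m → ℤ) (i : Fin m) (c : ℤ) :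
    translate n (update α i c) = update (translate n α) i (n + c) := by
  ext j; simp only [translate_apply, update_apply]; split_ifs <;> rfl

lemma reflect_update (n : ℤ) (α : Fin m → ℤ) (i : Fin m) (c : ℤ) :
    reflect n (update α i.rev c) = update (reflect n α) i (n - c) := by
  ext j; simp only [reflect_apply, update_apply, Fin.rev_inj]; split_ifs <;> rfl

@[simp] lemma monotone_translate_iff {n : ℤ} {α : Fin m → ℤ} :
    Monotone (translate n α) ↔ Monotone α :=
  forall₃_congr fun _ _ _ => add_le_add_iff_left n

@[simp] lemma monotone_reflect_iff {n : ℤ} {α : Fin m → ℤ} :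
    Monotone (reflect n α) ↔ Monotone α := by
  refine ⟨fun h i j hij => (sub_le_sub_iff_left n).1 ?_,
    fun h i j hij => sub_le_sub_left (h (Fin.rev_le_rev.2 hij)) n⟩
  simpa only [reflect_apply, Fin.rev_rev] using h (Fin.rev_le_rev.2 hij)

lemma increasable_translate_iff {n : ℤ} {α : Fin m → ℤ} {i : Fin m} :
    Increasable (translate n α) i ↔ Increasable α i := by
  have h : update (translate n α) i (translate n α i + 1) = translate n (update α i (α i + 1)) := by
    rw [translate_update, translate_apply, add_assoc]
  rw [Increasable, h, monotone_translate_iff, Increasable]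

lemma decreasable_translate_iff {n : ℤ} {α : Fin m → ℤ} {i : Fin m} :
    Decreasable (translate n α) i ↔ Decreasable α i := by
  have h : update (translate n α) i (translate n α i - 1) = translate n (update α i (α i - 1)) := by
    rw [translate_update, translate_apply, add_sub_assoc]
  rw [Decreasable, h, monotone_translate_iff, Decreasable]

lemma increasable_reflect_iff {n : ℤ} {α : Fin m → ℤ} {i : Fin m} :
    Increasable (reflect n α) i ↔ Decreasable α i.rev := by
  have h : update (reflect n α) i (reflect n α i + 1) =
      reflect n (update α i.rev (α i.rev - 1)) := by
    rw [reflect_update, reflect_apply, sub_sub_eq_add_sub, add_sub_right_comm]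
  rw [Increasable, h, monotone_reflect_iff, Decreasable]

lemma decreasable_reflect_iff {n : ℤ} {α : Fin m → ℤ} {i : Fin m} :
    Decreasable (reflect n α) i ↔ Increasable α i.rev := by
  have h : update (reflect n α) i (reflect n α i - 1) =
      reflect n (update α i.rev (α i.rev + 1)) := by
    rw [reflect_update, reflect_apply, sub_add_eq_sub_sub]
  rw [Decreasable, h, monotone_reflect_iff, Increasable]

lemma dispPlus_translate {Λ Λ' : Set ℤ} {n : ℤ} (hΛ : ∀ x, n + x ∈ Λ' ↔ x ∈ Λ) (α : Fin m → ℤ) :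
    dispPlus Λ' (translate n α) = translate n (dispPlus Λ α) := by
  ext i
  have hmem : n + α i + i + 1 ∈ Λ' ↔ α i + i + 1 ∈ Λ := by
    rw [← hΛ, add_assoc, add_assoc, add_assoc]
  rw [translate_apply n (dispPlus Λ α)]
  unfold dispPlus
  rw [translate_apply n α, increasable_translate_iff, hmem]
  split_ifs <;> ring

lemma dispMinus_translate {Λ Λ' : Set ℤ} {n : ℤ} (hΛ : ∀ x, n + x ∈ Λ' ↔ x ∈ Λ) (α : Fin m → ℤ) :
    dispMinus Λ' (translate n α) = translate n (dispMinus Λ α) := by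
  ext i
  have hmem : n + α i + i ∈ Λ' ↔ α i + i ∈ Λ := by rw [← hΛ, add_assoc]
  rw [translate_apply n (dispMinus Λ α)]
  unfold dispMinus
  rw [translate_apply n α, decreasable_translate_iff, hmem]
  split_ifs <;> ring

lemma val_rev_add_val (i : Fin m) : ((i.rev : ℕ) : ℤ) + i = m - 1 := by
  have := Fin.val_rev i
  omega

lemma dispPlus_reflect {Λ Λ' : Set ℤ} {n : ℤ} (hΛ : ∀ x, n + m - x ∈ Λ' ↔ x ∈ Λ)
    (α : Fin m → ℤ) : dispPlus Λ' (reflect n α) = reflect n (dispMinus Λ α) := by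
  ext i
  have hmem : n - α i.rev + i + 1 ∈ Λ' ↔ α i.rev + i.rev ∈ Λ := by
    rw [← hΛ, show n + m - (α i.rev + i.rev) = n - α i.rev + i + 1 by
      linear_combination -val_rev_add_val i]
  rw [reflect_apply n (dispMinus Λ α)]
  unfold dispPlus dispMinus
  rw [reflect_apply n α, increasable_reflect_iff, hmem]
  split_ifs <;> ring

lemma dispMinus_reflect {Λ Λ' : Set ℤ} {n : ℤ} (hΛ : ∀ x, n + m - x ∈ Λ' ↔ x ∈ Λ)
    (α : Fin m → ℤ) : dispMinus Λ' (reflect n α) = reflect n (dispPlus Λ α) := by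
  ext i
  have hmem : n - α i.rev + i ∈ Λ' ↔ α i.rev + i.rev + 1 ∈ Λ := by
    rw [← hΛ, show n + m - (α i.rev + i.rev + 1) = n - α i.rev + i by
      linear_combination -val_rev_add_val i]
  rw [reflect_apply n (dispPlus Λ α)]
  unfold dispPlus dispMinus
  rw [reflect_apply n α, decreasable_reflect_iff, hmem]
  split_ifs <;> ring

lemma Linked.translate {α β : Fin m → ℤ} (h : Linked α β) (n : ℤ) :
    Linked (translate n α) (translate n β) := by
  obtain ⟨Λ, hAP, hminus, hplus⟩ := h
  have hΛ : ∀ x, n + x ∈ (fun y => 1 * y + -n) ⁻¹' Λ ↔ x ∈ Λ := by simp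
  exact ⟨_, hAP.preimage_affine isUnit_one (-n),
    by rw [dispMinus_translate hΛ, ← hminus], by rw [dispPlus_translate hΛ, ← hplus]⟩

lemma Linked.reflect {α β : Fin m → ℤ} (h : Linked α β) (n : ℤ) :
    Linked (reflect n β) (reflect n α) := by
  obtain ⟨Λ, hAP, hminus, hplus⟩ := h
  have hΛ : ∀ x, n + m - x ∈ (fun y => -1 * y + (n + m)) ⁻¹' Λ ↔ x ∈ Λ := by simp
  exact ⟨_, hAP.preimage_affine isUnit_one.neg (n + m),
    by rw [dispMinus_reflect hΛ, ← hplus], by rw [dispPlus_reflect hΛ, ← hminus]⟩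

lemma skewSize_translate (n : ℤ) (α β : Fin m → ℤ) :
    skewSize (translate n α) (translate n β) = skewSize α β := by
  simp only [skewSize, translate_apply, add_sub_add_left_eq_sub]

lemma skewSize_reflect (n : ℤ) (α β : Fin m → ℤ) :
    skewSize (reflect n β) (reflect n α) = skewSize α β := by
  simp only [skewSize, reflect_apply, sub_sub_sub_cancel_left]
  exact Equiv.sum_comp Fin.revPerm fun i => β i - α i

lemma skewSize_add_skewSize (α β γ : Fin m → ℤ) :
    skewSize α β + skewSize β γ = skewSize α γ := by
  simp only [skewSize, ← Finset.sum_add_distrib, sub_add_sub_cancel']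

lemma IsNLink.translate {t : ℤ} {α β : Fin m → ℤ} (h : IsNLink t α β) (n : ℤ) :
    IsNLink t (translate n α) (translate n β) :=
  ⟨Linked.translate h.1 n, (skewSize_translate n α β).trans h.2⟩

lemma IsNLink.reflect {t : ℤ} {α β : Fin m → ℤ} (h : IsNLink t α β) (n : ℤ) :
    IsNLink t (reflect n β) (reflect n α) :=
  ⟨Linked.reflect h.1 n, (skewSize_reflect n α β).trans h.2⟩

def chainLengths (α β : Fin m → ℤ) : Set ℕ := {k | ∃ γ, IsLinkChain α β k γ}

lemma chainThreshold_eq_sInf (α β : Fin m → ℤ) :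
    chainThreshold α β = sInf (chainLengths α β) := rfl

lemma zero_mem_chainLengths_iff {α β : Fin m → ℤ} :
    0 ∈ chainLengths α β ↔ α = β ∧ Monotone α := by
  refine ⟨fun ⟨γ, h0, hlast, hmono, _⟩ => ⟨h0.symm.trans hlast, h0 ▸ hmono 0⟩, ?_⟩
  rintro ⟨rfl, hα⟩
  exact ⟨fun _ => α, rfl, rfl, fun _ => hα, Fin.elim0⟩

lemma succ_mem_chainLengths_iff {α β : Fin m → ℤ} {k : ℕ} :
    k + 1 ∈ chainLengths α β ↔ ∃ α', Monotone α' ∧ Monotone α ∧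
      (IsNLink 1 α α' ∨ IsNLink 2 α α') ∧ k ∈ chainLengths α' β := by
  constructor
  · rintro ⟨γ, h0, hlast, hmono, hstep⟩
    subst h0
    refine ⟨γ 1, hmono 1, hmono 0, hstep 0, Fin.tail γ, rfl, ?_, fun j => hmono _, fun j => ?_⟩
    · rwa [Fin.tail, Fin.succ_last]
    · simpa only [Fin.tail, Fin.succ_castSucc] using hstep j.succ
  · rintro ⟨α', hα', hα, hfirst, γ, rfl, hlast, hmono, hstep⟩
    refine ⟨Fin.cons α γ, rfl, by rwa [← Fin.succ_last, Fin.cons_succ],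
      Fin.forall_fin_succ.2 ⟨hα, hmono⟩, Fin.forall_fin_succ.2 ⟨hfirst, fun j => ?_⟩⟩
    simpa only [← Fin.succ_castSucc, Fin.cons_succ] using hstep j

lemma add_mem_chainLengths {α β γ : Fin m → ℤ} {k l : ℕ} (hk : k ∈ chainLengths α β)
    (hl : l ∈ chainLengths β γ) : k + l ∈ chainLengths α γ := by
  induction k generalizing α with
  | zero =>
    obtain ⟨rfl, -⟩ := zero_mem_chainLengths_iff.1 hk
    rwa [zero_add]
  | succ k ih =>
    obtain ⟨α', hα', hα, hstep, hk'⟩ := succ_mem_chainLengths_iff.1 hk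
    rw [add_right_comm]
    exact succ_mem_chainLengths_iff.2 ⟨α', hα', hα, hstep, ih hk'⟩

lemma mem_chainLengths_translate {α β : Fin m → ℤ} {k : ℕ} (n : ℤ) (hk : k ∈ chainLengths α β) :
    k ∈ chainLengths (translate n α) (translate n β) := by
  induction k generalizing α with
  | zero =>
    obtain ⟨rfl, hα⟩ := zero_mem_chainLengths_iff.1 hk
    exact zero_mem_chainLengths_iff.2 ⟨rfl, monotone_translate_iff.2 hα⟩
  | succ k ih =>
    obtain ⟨α', hα', hα, hstep, hk'⟩ := succ_mem_chainLengths_iff.1 hk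
    exact succ_mem_chainLengths_iff.2 ⟨translate n α', monotone_translate_iff.2 hα',
      monotone_translate_iff.2 hα, hstep.imp (IsNLink.translate · n) (IsNLink.translate · n),
      ih hk'⟩

lemma mem_chainLengths_reflect {α β : Fin m → ℤ} {k : ℕ} (n : ℤ) (hk : k ∈ chainLengths α β) :
    k ∈ chainLengths (reflect n β) (reflect n α) := by
  induction k generalizing α with
  | zero =>
    obtain ⟨rfl, hα⟩ := zero_mem_chainLengths_iff.1 hk
    exact zero_mem_chainLengths_iff.2 ⟨rfl, monotone_reflect_iff.2 hα⟩
  | succ k ih =>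
    obtain ⟨α', hα', hα, hstep, hk'⟩ := succ_mem_chainLengths_iff.1 hk
    have hlast : 1 ∈ chainLengths (reflect n α') (reflect n α) :=
      succ_mem_chainLengths_iff.2 ⟨reflect n α, monotone_reflect_iff.2 hα,
        monotone_reflect_iff.2 hα', hstep.imp (IsNLink.reflect · n) (IsNLink.reflect · n),
        zero_mem_chainLengths_iff.2 ⟨rfl, monotone_reflect_iff.2 hα⟩⟩
    exact add_mem_chainLengths (ih hk') hlast

lemma chainLengths_translate (n : ℤ) (α β : Fin m → ℤ) :
    chainLengths (translate n α) (translate n β) = chainLengths α β := by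
  refine Set.Subset.antisymm (fun k hk => ?_) fun k => mem_chainLengths_translate n
  simpa using mem_chainLengths_translate (-n) hk

lemma chainLengths_reflect (n : ℤ) (α β : Fin m → ℤ) :
    chainLengths (reflect n β) (reflect n α) = chainLengths α β := by
  refine Set.Subset.antisymm (fun k hk => ?_) fun k => mem_chainLengths_reflect n
  simpa using mem_chainLengths_reflect n hk

lemma strictMono_add_val {α : Fin m → ℤ} (hα : Monotone α) :
    StrictMono fun i : Fin m => α i + i :=
  hα.add_strictMono (Nat.strictMono_cast.comp Fin.val_strictMono)

/-- The linking progression is the singleton `{α i + i + 1}`, which the strictly increasing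
`j ↦ α j + j` meets only at `j = i`. -/
lemma isNLink_one_update {α : Fin m → ℤ} {i : Fin m} (hα : Monotone α) (hi : Increasable α i) :
    IsNLink 1 α (update α i (α i + 1)) := by
  have hβi : update α i (α i + 1) i + i = α i + i + 1 := by rw [update_self, add_right_comm]
  have hdec : Decreasable (update α i (α i + 1)) i := by
    rwa [Decreasable, update_idem, update_self, add_sub_cancel_right, update_eq_self]
  refine ⟨⟨{α i + i + 1}, ⟨Set.singleton_ne_univ _, Or.inr (Or.inl ⟨_, rfl⟩)⟩, ?_, ?_⟩, ?_⟩
  · ext j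
    unfold dispMinus
    rcases eq_or_ne j i with rfl | hj
    · rw [if_pos ⟨hdec, hβi⟩, update_self, add_sub_cancel_right]
    · rw [if_neg fun h => hj ((strictMono_add_val hi).injective (h.2.trans hβi.symm)),
        update_of_ne hj]
  · ext j
    unfold dispPlus
    rcases eq_or_ne j i with rfl | hj
    · rw [if_pos ⟨hi, rfl⟩, update_self]
    · rw [if_neg fun h => hj ((strictMono_add_val hα).injective (add_right_cancel h.2)),
        update_of_ne hj]
  · rw [skewSize, Finset.sum_eq_single i (fun j _ hj => by rw [update_of_ne hj, sub_self])
      (by simp), update_self, add_sub_cancel_left]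

lemma increasable_of_forall_lt {α : Fin m → ℤ} {i : Fin m} (hα : Monotone α)
    (h : ∀ j, i < j → α i < α j) : Increasable α i := by
  intro a b hab
  simp only [update_apply]
  split_ifs with ha hb hb
  · rfl
  · subst ha; exact h b (lt_of_le_of_ne hab (Ne.symm hb))
  · subst hb; linarith [hα hab]
  · exact hα hab

lemma exists_increasable_update_le {α β : Fin m → ℤ} (hα : Monotone α) (hβ : Monotone β)
    (hle : α ≤ β) (hne : α ≠ β) : ∃ i, Increasable α i ∧ update α i (α i + 1) ≤ β := by
  have hs : (Finset.univ.filter fun j => α j < β j).Nonempty := by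
    obtain ⟨j, hj⟩ := Function.ne_iff.1 hne
    exact ⟨j, Finset.mem_filter.2 ⟨Finset.mem_univ j, lt_of_le_of_ne (hle j) hj⟩⟩
  obtain ⟨i, hi, hmax⟩ := Finset.exists_max_image _ id hs
  have hi : α i < β i := (Finset.mem_filter.1 hi).2
  have heq : ∀ j, i < j → α j = β j := fun j hij => (hle j).antisymm <| not_lt.1 fun hj =>
    hij.not_ge (hmax j (Finset.mem_filter.2 ⟨Finset.mem_univ j, hj⟩))
  refine ⟨i, increasable_of_forall_lt hα fun j hij => ?_, fun j => ?_⟩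
  · rw [heq j hij]; exact hi.trans_le (hβ hij.le)
  · rcases eq_or_ne j i with rfl | hj
    · rw [update_self]; exact hi
    · rw [update_of_ne hj]; exact hle j

lemma skewSize_nonneg {α β : Fin m → ℤ} (hle : α ≤ β) : 0 ≤ skewSize α β :=
  Finset.sum_nonneg fun i _ => sub_nonneg.2 (hle i)

lemma eq_of_skewSize_eq_zero {α β : Fin m → ℤ} (hle : α ≤ β) (h : skewSize α β = 0) : α = β :=
  funext fun i => (sub_eq_zero.1 <| (Finset.sum_eq_zero_iff_of_nonneg
    fun j _ => sub_nonneg.2 (hle j)).1 h i (Finset.mem_univ i)).symm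

lemma chainLengths_nonempty {α β : Fin m → ℤ} (hα : Monotone α) (hβ : Monotone β) (hle : α ≤ β) :
    (chainLengths α β).Nonempty := by
  obtain ⟨N, hN⟩ : ∃ N : ℕ, skewSize α β = N :=
    ⟨_, (Int.toNat_of_nonneg (skewSize_nonneg hle)).symm⟩
  induction N generalizing α with
  | zero => exact ⟨0, zero_mem_chainLengths_iff.2 ⟨eq_of_skewSize_eq_zero hle hN, hα⟩⟩
  | succ N ih =>
    have hne : α ≠ β := by
      rintro rfl
      simp only [skewSize, sub_self, Finset.sum_const_zero] at hN
      omega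
    obtain ⟨i, hi, hle'⟩ := exists_increasable_update_le hα hβ hle hne
    have hlink := isNLink_one_update hα hi
    have hN' : skewSize (update α i (α i + 1)) β = N := by
      push_cast at hN
      linarith [skewSize_add_skewSize α (update α i (α i + 1)) β, hlink.2]
    obtain ⟨k, hk⟩ := ih hi hle' hN'
    exact ⟨k + 1, succ_mem_chainLengths_iff.2 ⟨_, hi, hα, Or.inl hlink, hk⟩⟩

lemma chainThreshold_le_add {α β γ : Fin m → ℤ} (hα : Monotone α) (hβ : Monotone β)
    (hγ : Monotone γ) (hαβ : α ≤ β) (hβγ : β ≤ γ) :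
    chainThreshold α γ ≤ chainThreshold α β + chainThreshold β γ :=
  Nat.sInf_le (add_mem_chainLengths (Nat.sInf_mem (chainLengths_nonempty hα hβ hαβ))
    (Nat.sInf_mem (chainLengths_nonempty hβ hγ hβγ)))

lemma cdelta_translate (n : ℤ) (α β : Fin m → ℤ) :
    cdelta (translate n α) (translate n β) = cdelta α β := by
  rw [cdelta, cdelta, chainThreshold_eq_sInf, chainLengths_translate, skewSize_translate,
    chainThreshold_eq_sInf]

lemma cdelta_reflect (n : ℤ) (α β : Fin m → ℤ) :
    cdelta (reflect n β) (reflect n α) = cdelta α β := by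
  rw [cdelta, cdelta, chainThreshold_eq_sInf, chainLengths_reflect, skewSize_reflect,
    chainThreshold_eq_sInf]

lemma cdelta_le_add {α β γ : Fin m → ℤ} (hα : Monotone α) (hβ : Monotone β)
    (hγ : Monotone γ) (hαβ : α ≤ β) (hβγ : β ≤ γ) :
    cdelta α γ ≤ cdelta β γ + cdelta α β := by
  have hct := chainThreshold_le_add hα hβ hγ hαβ hβγ
  have hsize := skewSize_add_skewSize α β γ
  simp only [cdelta]
  omega

end RamificationSeq

open RamificationSeq in
/-- Displacement difficulty is invariant under translation `α ↦ n + α` and reflection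
`α ↦ n − α` (where `(n−α)_i = n − α_{r−i}`), and is subadditive:
`cδ(γ/α) ≤ cδ(γ/β) + cδ(β/α)` for `α ≤ β ≤ γ`. -/
theorem cdelta_invariance_subadditive (r : ℕ) :
    (∀ (α β : Fin (r+1) → ℤ), Monotone α → Monotone β → α ≤ β → ∀ n : ℤ,
      cdelta α β = cdelta (fun i => n + α i) (fun i => n + β i) ∧
      cdelta α β = cdelta (fun i => n - β i.rev) (fun i => n - α i.rev)) ∧
    (∀ (α β γ : Fin (r+1) → ℤ), Monotone α → Monotone β → Monotone γ →
      α ≤ β → β ≤ γ → cdelta α γ ≤ cdelta β γ + cdelta α β) :=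
  ⟨fun α β _ _ _ n => ⟨(cdelta_translate n α β).symm, (cdelta_reflect n α β).symm⟩,
    fun _ _ _ hα hβ hγ hαβ hβγ => cdelta_le_add hα hβ hγ hαβ hβγ⟩
end

section
/- Let S be a primitive numerical semigroup of genus g with gaps t_1 < t_2 < ⋯ < t_g, and let t'_1 < t'_2 < ⋯ < t'_g be positive integers with t'_i ≤ t_i for all 1 ≤ i ≤ g. Then S' = ℤ_{≥0} \ {t'_1, …, t'_g} is also a primitive numerical semigroup (of genus g). -/
/-- A numerical semigroup: a cofinite subset of `ℕ` containing `0` and closed under addition. -/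
def IsNumSgp (S : Set ℕ) : Prop :=
  0 ∈ S ∧ (∀ a ∈ S, ∀ b ∈ S, a + b ∈ S) ∧ Sᶜ.Finite

/-- The genus of a numerical semigroup: the number of gaps. -/
noncomputable def genus (S : Set ℕ) : ℕ := Sᶜ.ncard

/-- Primitivity: twice the smallest positive element exceeds the largest gap. -/
noncomputable def IsPrimitiveNS (S : Set ℕ) : Prop :=
  sSup Sᶜ < 2 * sInf {s | s ∈ S ∧ 0 < s}

/-- The weight of a numerical semigroup: `Σ_{n=1}^g (t_n − n)`, computed as the sum of the
gaps minus `1 + 2 + ⋯ + g`. -/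
noncomputable def weight (S : Set ℕ) : ℕ :=
  (∑ᶠ t ∈ Sᶜ, t) - genus S * (genus S + 1) / 2

/-- Decreasing the gaps of a primitive numerical semigroup yields a primitive numerical
semigroup: if `S` is primitive of genus `g` with gaps `t 0 < ⋯ < t (g-1)` and
`t' 0 < ⋯ < t' (g-1)` are positive integers with `t' i ≤ t i`, then
`S' = ℕ \ {t' i}` is a primitive numerical semigroup of genus `g`. -/
theorem primitive_decrease_gaps (S : Set ℕ) (hS : IsNumSgp S) (hP : IsPrimitiveNS S)
    (g : ℕ) (t t' : Fin g → ℕ) (ht : StrictMono t) (htr : Set.range t = Sᶜ)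
    (ht' : StrictMono t') (ht'pos : ∀ i, 0 < t' i) (hle : ∀ i, t' i ≤ t i) :
    IsNumSgp (Set.range t')ᶜ ∧ IsPrimitiveNS (Set.range t')ᶜ ∧
      genus (Set.range t')ᶜ = g := by
  set m := sInf {s | s ∈ S ∧ 0 < s} with hm
  have hP' : sSup Sᶜ < 2 * m := hP
  have hm1 : 0 < m := by omega
  -- every gap index grows: j < t ⟨j, _⟩
  have keyt : ∀ j (hj : j < g), j < t ⟨j, hj⟩ := by
    intro j
    induction j with
    | zero =>
      intro hj
      have h0 : t ⟨0, hj⟩ ∈ Sᶜ := htr ▸ Set.mem_range_self _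
      have h1 : (0 : ℕ) ∈ S := hS.1
      rcases Nat.eq_zero_or_pos (t ⟨0, hj⟩) with h | h
      · exact absurd (h ▸ h0) (by simpa using h1)
      · exact h
    | succ k ih =>
      intro hj
      have hk : k < g := Nat.lt_of_succ_lt hj
      have h1 := ih hk
      have h2 : t ⟨k, hk⟩ < t ⟨k + 1, hj⟩ := ht (by simp [Fin.mk_lt_mk])
      omega
  have keyt' : ∀ j (hj : j < g), j < t' ⟨j, hj⟩ := by
    intro j
    induction j with
    | zero => intro hj; exact ht'pos _
    | succ k ih =>
      intro hj
      have hk : k < g := Nat.lt_of_succ_lt hj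
      have h1 := ih hk
      have h2 : t' ⟨k, hk⟩ < t' ⟨k + 1, hj⟩ := ht' (by simp [Fin.mk_lt_mk])
      omega
  have notS : ∀ n : ℕ, 0 < n → n < m → n ∉ S := by
    intro n hn hnm hnS
    have : m ≤ n := Nat.sInf_le ⟨hnS, hn⟩
    omega
  -- small gaps are exactly 1, 2, ..., m-1
  have claimE : ∀ j (hj : j < g), t ⟨j, hj⟩ < m → t ⟨j, hj⟩ = j + 1 := by
    intro j
    induction j using Nat.strong_induction_on with
    | _ j ih =>
      intro hj htj
      have h1 : j < t ⟨j, hj⟩ := keyt j hj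
      by_contra hne
      have h2 : j + 2 ≤ t ⟨j, hj⟩ := by omega
      set v := t ⟨j, hj⟩ - 1 with hv
      have hvS : v ∉ S := notS v (by omega) (by omega)
      have hvR : v ∈ Set.range t := htr ▸ hvS
      obtain ⟨i, hi⟩ := hvR
      have hiv : (i : ℕ) < t i := keyt i i.isLt
      have hlt : i < (⟨j, hj⟩ : Fin g) := ht.lt_iff_lt.mp (by omega)
      have hij : (i : ℕ) < j := hlt
      have hE := ih i hij i.isLt (by show t i < m; omega)
      have : t i = (i : ℕ) + 1 := hE
      omega
  have claimA : ∀ n : ℕ, 0 < n → n < m → n ∈ Set.range t' := by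
    intro n hn hnm
    have hnR : n ∈ Set.range t := htr ▸ notS n hn hnm
    obtain ⟨i, hi⟩ := hnR
    have hE : t i = (i : ℕ) + 1 := claimE i i.isLt (by show t i < m; omega)
    have h1 : (i : ℕ) < t' i := keyt' i i.isLt
    have h2 : t' i ≤ t i := hle i
    exact ⟨i, by omega⟩
  have bound : ∀ i : Fin g, t' i < 2 * m := by
    intro i
    have h1 : t i ∈ Sᶜ := htr ▸ Set.mem_range_self _
    have h2 : t i ≤ sSup Sᶜ := le_csSup hS.2.2.bddAbove h1
    have := hle i
    omega
  have h0 : (0 : ℕ) ∈ (Set.range t')ᶜ := by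
    intro ⟨i, hi⟩
    have := ht'pos i
    omega
  have hbig : ∀ n : ℕ, 0 < n → n ∈ (Set.range t')ᶜ → m ≤ n := by
    intro n hn hnc
    by_contra h
    exact hnc (claimA n hn (by omega))
  refine ⟨⟨h0, ?_, ?_⟩, ?_, ?_⟩
  · -- closure
    intro a ha b hb
    rcases Nat.eq_zero_or_pos a with rfl | hapos
    · simpa using hb
    rcases Nat.eq_zero_or_pos b with rfl | hbpos
    · simpa using ha
    intro ⟨i, hi⟩
    have h1 := hbig a hapos ha
    have h2 := hbig b hbpos hb
    have h3 := bound i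
    omega
  · rw [compl_compl]
    exact Set.finite_range t'
  · -- primitivity
    show sSup ((Set.range t')ᶜ)ᶜ < 2 * sInf {s | s ∈ (Set.range t')ᶜ ∧ 0 < s}
    rw [compl_compl]
    set m' := sInf {s | s ∈ (Set.range t')ᶜ ∧ 0 < s} with hm'
    have hne : (2 * m) ∈ {s | s ∈ (Set.range t')ᶜ ∧ 0 < s} := by
      refine ⟨?_, by omega⟩
      intro ⟨i, hi⟩
      have := bound i
      omega
    have hmem := Nat.sInf_mem ⟨2 * m, hne⟩
    have hmm' : m ≤ m' := hbig m' hmem.2 hmem.1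
    rcases Nat.eq_zero_or_pos g with rfl | hg
    · have : Set.range t' = (∅ : Set ℕ) := by
        simp [Set.range_eq_empty]
      rw [this, csSup_empty]
      simp only [Nat.bot_eq_zero]
      omega
    · haveI : Nonempty (Fin g) := ⟨⟨0, hg⟩⟩
      have hne' : (Set.range t').Nonempty := Set.range_nonempty _
      have hsup : sSup (Set.range t') ∈ Set.range t' :=
        hne'.csSup_mem (Set.finite_range t')
      obtain ⟨i, hi⟩ := hsup
      have := bound i
      omega
  · -- genus
    show ((Set.range t')ᶜ)ᶜ.ncard = g
    rw [compl_compl]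
    rw [← Set.image_univ, Set.ncard_image_of_injective _ ht'.injective]
    simp [Set.ncard_univ]
end

section
/- Let S be a primitive numerical semigroup of genus g ≥ 1 with wt(S) > 0, and let t be the largest gap of S such that t−1 ∈ S (such a gap exists). Then t > 1, and S' = (S ∪ {t}) \ {t−1} is a primitive numerical semigroup of genus g and weight wt(S) − 1. -/
/-!
Exchanging `t - 1 ∈ S` for the gap `t` keeps the number of gaps and lowers their sum by one,
hence lowers the weight by one. The new set is still closed under addition: by primitivity
`t - 1 < 2 s₁` is not a sum of two positive elements, `2t > t_g` lies in `S`, and `a + t ∈ S`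
for `0 < a ∈ S` because otherwise `a + t` would be a larger gap preceded by `a + (t - 1) ∈ S`.
Finally `t > 1`: otherwise positive elements of `S` are never followed by gaps, so the gaps
are `1, …, g` and the weight vanishes.
-/

namespace NumSgp

open Set

variable {S : Set ℕ} {t : ℕ}

theorem compl_union_diff_singleton {α : Type*} (s : Set α) (a b : α) :
    ((s ∪ {b}) \ {a})ᶜ = insert a (sᶜ \ {b}) := by
  ext x
  simp only [mem_compl_iff, mem_sdiff, mem_union, mem_singleton_iff, mem_insert_iff]
  tauto

theorem genus_union_diff_singleton {a b : ℕ} (hfin : Sᶜ.Finite) (ha : a ∈ S) (hb : b ∉ S) :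
    genus ((S ∪ {b}) \ {a}) = genus S := by
  have hab : a ∉ Sᶜ \ {b} := fun h => h.1 ha
  rw [genus, genus, compl_union_diff_singleton, ncard_insert_of_notMem hab (hfin.sdiff),
    ncard_sdiff_singleton_add_one hb hfin]

theorem finsum_compl_union_diff_singleton {a b : ℕ} (hfin : Sᶜ.Finite) (ha : a ∈ S)
    (hb : b ∉ S) :
    (∑ᶠ x ∈ ((S ∪ {b}) \ {a})ᶜ, x) + b = (∑ᶠ x ∈ Sᶜ, x) + a := by
  have hab : a ∉ Sᶜ \ {b} := fun h => h.1 ha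
  have hbb : b ∉ Sᶜ \ {b} := fun h => h.2 rfl
  have hsplit : ∑ᶠ x ∈ Sᶜ, x = b + ∑ᶠ x ∈ Sᶜ \ {b}, x := by
    rw [← finsum_mem_insert (fun x : ℕ => x) hbb hfin.sdiff, insert_sdiff_singleton,
      insert_eq_of_mem (show b ∈ Sᶜ from hb)]
  rw [compl_union_diff_singleton, finsum_mem_insert _ hab hfin.sdiff, hsplit]
  omega

theorem weight_union_diff_singleton (hfin : Sᶜ.Finite) (ht : t ∉ S) (ht1 : t - 1 ∈ S) :
    weight ((S ∪ {t}) \ {t - 1}) = weight S - 1 := by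
  have ht0 : t ≠ 0 := by rintro rfl; exact ht ht1
  have hsum := finsum_compl_union_diff_singleton hfin ht1 ht
  rw [weight, weight, genus_union_diff_singleton hfin ht1 ht]
  omega

theorem sum_Icc_one_id (n : ℕ) : ∑ i ∈ Finset.Icc 1 n, i = n * (n + 1) / 2 := by
  have h := Finset.sum_range_id (n + 1)
  rw [Finset.sum_range_succ', add_zero, Nat.add_sub_cancel, mul_comm] at h
  rw [← Finset.Ico_add_one_right_eq_Icc, Finset.sum_Ico_eq_sum_range, Nat.add_sub_cancel, ← h]
  simp only [add_comm]

theorem weight_eq_zero_of_compl_eq_Icc {n : ℕ} (h : Sᶜ = Icc 1 n) : weight S = 0 := by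
  rw [weight, genus, h, ← Finset.coe_Icc, finsum_mem_coe_finset, ncard_coe_finset,
    Nat.card_Icc, Nat.add_sub_cancel, sum_Icc_one_id, Nat.sub_self]

theorem compl_eq_Icc_sSup (h0 : 0 ∈ S) (hfin : Sᶜ.Finite)
    (h : ∀ u, u ∉ S → u - 1 ∈ S → u ≤ 1) : Sᶜ = Icc 1 (sSup Sᶜ) := by
  have hup : ∀ x ∈ S, 1 ≤ x → ∀ y, x ≤ y → y ∈ S := by
    intro x hx hx1 y hxy
    induction y, hxy using Nat.le_induction with
    | base => exact hx
    | succ y hxy ih =>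
      by_contra hy
      have := h (y + 1) hy (by simpa using ih)
      omega
  ext x
  constructor
  · intro hx
    exact ⟨Nat.one_le_iff_ne_zero.2 (by rintro rfl; exact hx h0), le_csSup hfin.bddAbove hx⟩
  · rintro ⟨hx1, hxT⟩ hxS
    rcases Sᶜ.eq_empty_or_nonempty with hempty | hne
    · simp only [hempty, csSup_empty, Nat.bot_eq_zero] at hxT
      omega
    · exact Nat.sSup_mem hne hfin.bddAbove (hup x hxS hx1 _ hxT)

theorem one_lt_of_weight_pos (hS : IsNumSgp S) (hw : 0 < weight S)
    (ht : IsGreatest {u | u ∉ S ∧ u - 1 ∈ S} t) : 1 < t := by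
  by_contra! h1t
  refine hw.ne' (weight_eq_zero_of_compl_eq_Icc (compl_eq_Icc_sSup hS.1 hS.2.2 ?_))
  exact fun u hu hu1 => (ht.2 ⟨hu, hu1⟩).trans h1t

theorem eq_zero_or_eq_zero_of_add_lt_two_mul_sInf {x y : ℕ} (hx : x ∈ S) (hy : y ∈ S)
    (hxy : x + y < 2 * sInf {s | s ∈ S ∧ 0 < s}) : x = 0 ∨ y = 0 := by
  by_contra! h
  have hmx : sInf {s | s ∈ S ∧ 0 < s} ≤ x := Nat.sInf_le ⟨hx, Nat.pos_of_ne_zero h.1⟩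
  have hmy : sInf {s | s ∈ S ∧ 0 < s} ≤ y := Nat.sInf_le ⟨hy, Nat.pos_of_ne_zero h.2⟩
  omega

theorem add_mem_of_isGreatest (hS : IsNumSgp S) (ht : IsGreatest {u | u ∉ S ∧ u - 1 ∈ S} t)
    {a : ℕ} (ha : a ∈ S) (ha0 : 0 < a) : a + t ∈ S := by
  have ht0 : t ≠ 0 := by rintro rfl; exact ht.1.1 hS.1
  by_contra h
  have hpred : a + t - 1 ∈ S := by
    rw [show a + t - 1 = a + (t - 1) by omega]
    exact hS.2.1 a ha _ ht.1.2
  have := ht.2 ⟨h, hpred⟩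
  omega

theorem isNumSgp_union_diff_singleton (hS : IsNumSgp S) (hP : IsPrimitiveNS S)
    (ht : IsGreatest {u | u ∉ S ∧ u - 1 ∈ S} t) (h1t : 1 < t) :
    IsNumSgp ((S ∪ {t}) \ {t - 1}) := by
  obtain ⟨h0, hadd, hfin⟩ := hS
  have hm : sInf {s | s ∈ S ∧ 0 < s} ≤ t - 1 := Nat.sInf_le ⟨ht.1.2, by omega⟩
  have hT : t ≤ sSup Sᶜ := le_csSup hfin.bddAbove ht.1.1
  have h2t : t + t ∈ S := by
    by_contra h
    have := le_csSup hfin.bddAbove h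
    rw [IsPrimitiveNS] at hP
    omega
  have hsum_ne : ∀ a ∈ S, ∀ b ∈ S, a ≠ t - 1 → b ≠ t - 1 → a + b ≠ t - 1 := by
    intro a ha b hb ha' hb' hab
    rcases eq_zero_or_eq_zero_of_add_lt_two_mul_sInf ha hb (by rw [IsPrimitiveNS] at hP; omega)
      with rfl | rfl <;> omega
  have hadd_t : ∀ a ∈ S, a + t ∈ (S ∪ {t}) \ {t - 1} := by
    intro a ha
    rcases Nat.eq_zero_or_pos a with rfl | ha0
    · exact ⟨Or.inr (zero_add t), by simp only [mem_singleton_iff]; omega⟩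
    · exact ⟨Or.inl (add_mem_of_isGreatest ⟨h0, hadd, hfin⟩ ht ha ha0),
        by simp only [mem_singleton_iff]; omega⟩
  refine ⟨⟨Or.inl h0, by simp only [mem_singleton_iff]; omega⟩, ?_, ?_⟩
  · rintro a ⟨ha | rfl, ha'⟩ b ⟨hb | rfl, hb'⟩
    · exact ⟨Or.inl (hadd a ha b hb), hsum_ne a ha b hb ha' hb'⟩
    · exact hadd_t a ha
    · exact add_comm b a ▸ hadd_t b hb
    · exact ⟨Or.inl h2t, by simp only [mem_singleton_iff]; omega⟩
  · rw [compl_union_diff_singleton]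
    exact hfin.sdiff.insert _

theorem isPrimitiveNS_union_diff_singleton (hfin : Sᶜ.Finite) (hP : IsPrimitiveNS S)
    (h1t : 1 < t) (ht : t ∉ S) (ht1 : t - 1 ∈ S) :
    IsPrimitiveNS ((S ∪ {t}) \ {t - 1}) := by
  have hT : t ≤ sSup Sᶜ := le_csSup hfin.bddAbove ht
  have hm : sInf {s | s ∈ S ∧ 0 < s} ≤ t - 1 := Nat.sInf_le ⟨ht1, by omega⟩
  have hsSup : sSup ((S ∪ {t}) \ {t - 1})ᶜ ≤ sSup Sᶜ := by
    refine csSup_le' ?_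
    rw [mem_upperBounds, compl_union_diff_singleton]
    intro x hx
    rcases mem_insert_iff.1 hx with rfl | ⟨hx, -⟩
    · omega
    · exact le_csSup hfin.bddAbove hx
  have hsInf : sInf {s | s ∈ S ∧ 0 < s} ≤ sInf {s | s ∈ (S ∪ {t}) \ {t - 1} ∧ 0 < s} := by
    refine le_csInf ⟨t, ⟨Or.inr rfl, by simp only [mem_singleton_iff]; omega⟩, by omega⟩ ?_
    rintro x ⟨⟨hx | rfl, -⟩, hx0⟩
    · exact Nat.sInf_le ⟨hx, hx0⟩
    · omega
  rw [IsPrimitiveNS] at hP ⊢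
  omega

end NumSgp

theorem primitive_weight_reduction_general (S : Set ℕ) (hS : IsNumSgp S) (hP : IsPrimitiveNS S)
    (hw : 0 < weight S) (t : ℕ)
    (ht : IsGreatest {u : ℕ | u ∉ S ∧ u - 1 ∈ S} t) :
    1 < t ∧ IsNumSgp ((S ∪ {t}) \ {t - 1}) ∧ IsPrimitiveNS ((S ∪ {t}) \ {t - 1}) ∧
      genus ((S ∪ {t}) \ {t - 1}) = genus S ∧
      weight ((S ∪ {t}) \ {t - 1}) = weight S - 1 := by
  have h1t : 1 < t := NumSgp.one_lt_of_weight_pos hS hw ht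
  have hS' := NumSgp.isNumSgp_union_diff_singleton hS hP ht h1t
  obtain ⟨⟨htS, ht1⟩, -⟩ := ht
  have hfin : Sᶜ.Finite := hS.2.2
  exact ⟨h1t, hS', NumSgp.isPrimitiveNS_union_diff_singleton hfin hP h1t htS ht1,
    NumSgp.genus_union_diff_singleton hfin ht1 htS,
    NumSgp.weight_union_diff_singleton hfin htS ht1⟩

/-- Weight reduction: if `S` is a primitive numerical semigroup of genus `g ≥ 1` with
`wt(S) > 0`, and `t` is the largest gap of `S` with `t − 1 ∈ S`, then `t > 1` and
`S' = (S ∪ {t}) \ {t−1}` is a primitive numerical semigroup of genus `g` and weight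
`wt(S) − 1`. -/
theorem primitive_weight_reduction (S : Set ℕ) (hS : IsNumSgp S) (hP : IsPrimitiveNS S)
    (hg : 1 ≤ genus S) (hw : 0 < weight S) (t : ℕ)
    (ht : IsGreatest {u : ℕ | u ∉ S ∧ u - 1 ∈ S} t) :
    1 < t ∧ IsNumSgp ((S ∪ {t}) \ {t - 1}) ∧ IsPrimitiveNS ((S ∪ {t}) \ {t - 1}) ∧
      genus ((S ∪ {t}) \ {t - 1}) = genus S ∧
      weight ((S ∪ {t}) \ {t - 1}) = weight S - 1 :=
  primitive_weight_reduction_general S hS hP hw t ht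
end
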